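/- arXiv:1606.06248 — 6 statements merged into one kernel-verified Lean document; each statement's English description precedes it below -/
import Mathlib

section
/- Let P be a finite poset in which the longest chains have length r. Then the following are equivalent: (1) E(chain(k); ddeg) = E(uni; ddeg) for all k = 0,1,...,r; (2) E(mchain(m); ddeg) = E(uni; ddeg) for all m ≥ 0; (3) E(mchain(m); ddeg) = E(uni; ddeg) for all m = 0,1,...,r; (4) E(m̂chain(m); ddeg) = E(uni; ddeg) for all m ≥ 0; (5) E(m̂chain(m); ddeg) = E(uni; ddeg) for all m = 0,1,...,r. -/
open scoped Classical

noncomputable section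

namespace CDEPaper

/-- The down-degree of `p`: the number of elements that `p` covers, as a real number. -/
def ddeg {α : Type*} [PartialOrder α] (p : α) : ℝ :=
  (Nat.card {q : α // q ⋖ p} : ℝ)

/-- The expectation of the statistic `f` with respect to the weights `μ`. -/
def expect {α : Type*} (μ : α → ℝ) (f : α → ℝ) : ℝ :=
  ∑ᶠ p, μ p * f p

/-- The uniform distribution on a finite type. -/
def uni (α : Type*) : α → ℝ :=
  fun _ => (Nat.card α : ℝ)⁻¹

/-- `μ` is a probability distribution. -/
def IsProbDist {α : Type*} (μ : α → ℝ) : Prop :=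
  (∀ x, 0 ≤ μ x) ∧ (∑ᶠ x, μ x) = 1

/-- The `k`-chain distribution: each `p` gets probability proportional to the number of
`k`-chains (strictly increasing sequences `c₀ < c₁ < ⋯ < c_k`) passing through `p`. -/
def chainDist (α : Type*) [PartialOrder α] (k : ℕ) : α → ℝ := fun p =>
  (Nat.card {c : Fin (k + 1) → α // StrictMono c ∧ ∃ i, c i = p} : ℝ) /
    (((k : ℝ) + 1) * (Nat.card {c : Fin (k + 1) → α // StrictMono c} : ℝ))

/-- The `m`-multichain distribution: each `p` gets probability proportional to the number of
`m`-multichains (weakly increasing sequences) passing through `p`. -/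
def mchainDist (α : Type*) [PartialOrder α] (m : ℕ) : α → ℝ := fun p =>
  (Nat.card {c : Fin (m + 1) → α // Monotone c ∧ ∃ i, c i = p} : ℝ) /
    (Nat.card {cq : (Fin (m + 1) → α) × α // Monotone cq.1 ∧ ∃ i, cq.1 i = cq.2} : ℝ)

/-- The modified `m`-multichain distribution: each `p` gets probability proportional to the
number of pairs `(c, i)` where `c` is an `m`-multichain and `c i = p`. -/
def mhatDist (α : Type*) [PartialOrder α] (m : ℕ) : α → ℝ := fun p =>
  (Nat.card {ci : (Fin (m + 1) → α) × Fin (m + 1) // Monotone ci.1 ∧ ci.1 ci.2 = p} : ℝ) /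
    (((m : ℝ) + 1) * (Nat.card {c : Fin (m + 1) → α // Monotone c} : ℝ))

/-- The maximal chain distribution: each `p` gets probability proportional to the number of
maximal chains passing through `p`. -/
def maxchainDist (α : Type*) [PartialOrder α] : α → ℝ := fun p =>
  (Nat.card {C : Set α // IsMaxChain (· ≤ ·) C ∧ p ∈ C} : ℝ) /
    (Nat.card {Cq : Set α × α // IsMaxChain (· ≤ ·) Cq.1 ∧ Cq.2 ∈ Cq.1} : ℝ)

/-- A poset has coincidental down-degree expectations (CDE). -/
def IsCDE (α : Type*) [PartialOrder α] : Prop :=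
  expect (maxchainDist α) ddeg = expect (uni α) ddeg

/-- A poset is mCDE: the expected down-degree with respect to the `k`-chain distribution agrees
with the uniform expected down-degree for every `k = 0, 1, …, r` (i.e. every `k` for which a
`k`-chain exists). -/
def IsMCDE (α : Type*) [PartialOrder α] : Prop :=
  ∀ k : ℕ, (∃ c : Fin (k + 1) → α, StrictMono c) →
    expect (chainDist α k) ddeg = expect (uni α) ddeg

/-- The distributive lattice `J(P)` of order ideals (lower sets) of a poset, ordered by
inclusion. -/
abbrev OIdeal (α : Type*) [PartialOrder α] : Type _ := {I : Set α // IsLowerSet I}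

/-- The indicator statistic that `p` can be toggled into the order ideal `I`. -/
def Tplus {α : Type*} [PartialOrder α] (p : α) (I : OIdeal α) : ℝ :=
  if p ∉ I.1 ∧ IsLowerSet (I.1 ∪ {p}) then 1 else 0

/-- The indicator statistic that `p` can be toggled out of the order ideal `I`. -/
def Tminus {α : Type*} [PartialOrder α] (p : α) (I : OIdeal α) : ℝ :=
  if p ∈ I.1 ∧ IsLowerSet (I.1 \ {p}) then 1 else 0

/-- A distribution on `J(P)` is toggle-symmetric if for every `p` the probability that `p` can
be toggled in equals the probability that `p` can be toggled out. -/
def ToggleSymmetric {α : Type*} [PartialOrder α] (μ : OIdeal α → ℝ) : Prop :=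
  ∀ p : α, expect μ (Tplus p) = expect μ (Tminus p)

/-- `J(P)` is toggle-CDE (tCDE): every toggle-symmetric probability distribution has the same
expected down-degree as the uniform distribution. -/
def IsTCDE (α : Type*) [PartialOrder α] : Prop :=
  ∀ μ : OIdeal α → ℝ, IsProbDist μ → ToggleSymmetric μ →
    expect μ ddeg = expect (uni (OIdeal α)) ddeg

end CDEPaper
namespace CDEPaper

/-! ### Skew shapes and shifted shapes -/

/-- The boxes of the skew shape `λ/ν` of height `a`, in matrix coordinates with 1-based rows
and columns: row `i` (for `1 ≤ i ≤ a`) consists of the boxes `[i,j]` with `ν i < j ≤ λ i`.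
The poset structure is the one induced from the componentwise (product) order on `ℕ × ℕ`. -/
def skewCells (a : ℕ) (lam nu : ℕ → ℕ) : Set (ℕ × ℕ) :=
  {b | 1 ≤ b.1 ∧ b.1 ≤ a ∧ nu b.1 < b.2 ∧ b.2 ≤ lam b.1}

/-- The boxes of the shifted Young diagram of a strict partition `λ` of length `l`:
the boxes `[i,j]` with `1 ≤ i ≤ l` and `i ≤ j ≤ λ i + i - 1`.  The poset structure is the one
induced from the componentwise (product) order on `ℕ × ℕ`. -/
def shiftCells (l : ℕ) (lam : ℕ → ℕ) : Set (ℕ × ℕ) :=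
  {b | 1 ≤ b.1 ∧ b.1 ≤ l ∧ b.1 ≤ b.2 ∧ b.2 < lam b.1 + b.1}

/-- The shifted rook statistic `R^shift_{ij}` on order ideals of (the poset of) `S`. -/
def Rshift (S : Set (ℕ × ℕ)) (i j : ℕ) (I : OIdeal ↥S) : ℝ :=
  (∑ᶠ (q : ↥S), if (q : ℕ × ℕ).1 ≤ i ∧ (q : ℕ × ℕ).2 ≤ j then Tplus q I else 0)
    + (∑ᶠ (q : ↥S), if i ≤ (q : ℕ × ℕ).1 ∧ j ≤ (q : ℕ × ℕ).2 then Tminus q I else 0)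
    - (∑ᶠ (q : ↥S),
        if (q : ℕ × ℕ).1 < i ∧ (q : ℕ × ℕ).2 < j ∧ (q : ℕ × ℕ).1 < (q : ℕ × ℕ).2 then
          Tminus q I else 0)
    - (∑ᶠ (q : ↥S),
        if i < (q : ℕ × ℕ).1 ∧ j < (q : ℕ × ℕ).2 ∧ (q : ℕ × ℕ).1 < (q : ℕ × ℕ).2 then
          Tplus q I else 0)

/-- The shifted diagram of `λ` (of length `l`) has an outward corner indexed by `i'`
(a north step followed by an east step on the southeast border, occurring at the lattice point
`(i', λ (i'+1) + i')`) if and only if `1 ≤ i' < l` and `λ i' ≥ λ (i'+1) + 2`. -/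
def IsCorner (l : ℕ) (lam : ℕ → ℕ) (i' : ℕ) : Prop :=
  1 ≤ i' ∧ i' + 1 ≤ l ∧ lam (i' + 1) + 2 ≤ lam i'

/-- An order ideal `I ∈ J(P_λ^shift)` contains the outward corner indexed by `i'`
(i.e. the lattice path of `I` contains both steps of the corner):  equivalently, `I` contains
both the last box `[i'+1, λ(i'+1)+i']` of row `i'+1` and the box `[i', λ(i'+1)+i'+1]`. -/
def ContainsCorner (l : ℕ) (lam : ℕ → ℕ) (I : OIdeal ↥(shiftCells l lam)) (i' : ℕ) : Prop :=
  (∃ q : ↥(shiftCells l lam), (q : ℕ × ℕ) = (i' + 1, lam (i' + 1) + i') ∧ q ∈ I.1) ∧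
  (∃ q : ↥(shiftCells l lam), (q : ℕ × ℕ) = (i', lam (i' + 1) + i' + 1) ∧ q ∈ I.1)

/-- A (not necessarily strict) partition `ν` (with parts `ν 1 ≥ ν 2 ≥ ⋯`) which, viewed as a
straight shape, is balanced with height and width both equal to `k`:  it has exactly `k`
nonzero parts, its first part is `k`, and every outward corner of its boundary path (which
occurs at the point `(i, ν (i+1))` whenever `ν i > ν (i+1)`) lies on the anti-diagonal
`i + j = k` of the `k × k` square. -/
def BalancedSquare (k : ℕ) (nu : ℕ → ℕ) : Prop :=
  (∀ i, 1 ≤ i → nu (i + 1) ≤ nu i) ∧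
  (∀ i, 1 ≤ i → i ≤ k → 1 ≤ nu i) ∧
  (∀ i, k < i → nu i = 0) ∧
  nu 1 = k ∧
  (∀ i, 1 ≤ i → i + 1 ≤ k → nu (i + 1) < nu i → i + nu (i + 1) = k)

/-- The poset `P_{a,1,1,d}`: a bottom chain `w₁ < ⋯ < w_a`, two incomparable elements `x, y`
covering `w_a`, and a top chain `z₁ < ⋯ < z_d` with `z₁` covering both `x` and `y`.
It is realized inside `ℕ × ℕ` (with the componentwise order) as
`w_i = (i,i)`, `x = (a+1, a)`, `y = (a, a+1)`, `z_j = (a+j, a+j)`. -/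
def Pa11d (a d : ℕ) : Set (ℕ × ℕ) :=
  {p | (1 ≤ p.1 ∧ p.1 ≤ a ∧ p.2 = p.1) ∨ p = (a + 1, a) ∨ p = (a, a + 1) ∨
    (∃ j, 1 ≤ j ∧ j ≤ d ∧ p = (a + j, a + j))}

/-! ### Shifted set-valued tableaux

Letters of the primed alphabet `1 < 1' < 2 < 2' < ⋯` are encoded as natural numbers:
the letter `m : ℕ` has value `m / 2 + 1` and is primed iff `m` is odd
(so `0 ↦ 1, 1 ↦ 1', 2 ↦ 2, 3 ↦ 2', …`); the order on letters is the usual order on `ℕ`. -/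

/-- The value of a letter. -/
def letterVal (m : ℕ) : ℕ := m / 2 + 1

/-- `T` is a shifted set-valued tableau of shape given by the box set `S`:  each box gets a
finite nonempty set of letters, all entries of a box weakly precede all entries of any strictly
larger box, each unprimed letter appears at most once in each column, and each primed letter
appears at most once in each row. -/
def IsSSVT (S : Set (ℕ × ℕ)) (T : ↥S → Finset ℕ) : Prop :=
  (∀ u, (T u).Nonempty) ∧
  (∀ u v : ↥S, u < v → ∀ x ∈ T u, ∀ y ∈ T v, x ≤ y) ∧
  (∀ u v : ↥S, u ≠ v → (u : ℕ × ℕ).2 = (v : ℕ × ℕ).2 →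
    ∀ m : ℕ, m % 2 = 0 → ¬(m ∈ T u ∧ m ∈ T v)) ∧
  (∀ u v : ↥S, u ≠ v → (u : ℕ × ℕ).1 = (v : ℕ × ℕ).1 →
    ∀ m : ℕ, m % 2 = 1 → ¬(m ∈ T u ∧ m ∈ T v))

/-- `T` is standard: distinct entry occurrences have distinct values, and the values used are
exactly `1, 2, …, N` where `N` is the total number of entries. -/
def IsStandardT (S : Set (ℕ × ℕ)) (T : ↥S → Finset ℕ) : Prop :=
  (∀ u v : ↥S, ∀ x ∈ T u, ∀ y ∈ T v, letterVal x = letterVal y → u = v ∧ x = y) ∧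
  (∀ m : ℕ, 1 ≤ m → m ≤ ∑ᶠ (u : ↥S), (T u).card → ∃ u : ↥S, ∃ x ∈ T u, letterVal x = m)

/-- `T` is barely set-valued: exactly one box has two entries; all other boxes have one. -/
def IsBarelySetValued (S : Set (ℕ × ℕ)) (T : ↥S → Finset ℕ) : Prop :=
  ∃ u₀ : ↥S, (T u₀).card = 2 ∧ ∀ u : ↥S, u ≠ u₀ → (T u).card = 1

/-- `T` is unprimed: no primed letters appear. -/
def IsUnprimed (S : Set (ℕ × ℕ)) (T : ↥S → Finset ℕ) : Prop :=
  ∀ u : ↥S, ∀ x ∈ T u, x % 2 = 0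

/-- `g^λ`: the number of unprimed standard shifted tableaux of shape `λ`. -/
def gShift (l : ℕ) (lam : ℕ → ℕ) : ℕ :=
  Nat.card {T : ↥(shiftCells l lam) → Finset ℕ //
    IsSSVT (shiftCells l lam) T ∧ IsStandardT (shiftCells l lam) T ∧
    (∀ u, (T u).card = 1) ∧ IsUnprimed (shiftCells l lam) T}

/-- The number of standard shifted barely set-valued tableaux of shape `λ`. -/
def numBarelySVT (l : ℕ) (lam : ℕ → ℕ) : ℕ :=
  Nat.card {T : ↥(shiftCells l lam) → Finset ℕ //
    IsSSVT (shiftCells l lam) T ∧ IsStandardT (shiftCells l lam) T ∧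
    IsBarelySetValued (shiftCells l lam) T}

/-! ### Toggles, rowmotion, orbits -/

/-- The toggle `τ_p` on order ideals. -/
def toggle {α : Type*} [PartialOrder α] (p : α) (I : OIdeal α) : OIdeal α :=
  if h : p ∉ I.1 ∧ IsLowerSet (I.1 ∪ {p}) then ⟨I.1 ∪ {p}, h.2⟩
  else if h' : p ∈ I.1 ∧ IsLowerSet (I.1 \ {p}) then ⟨I.1 \ {p}, h'.2⟩
  else I

/-- The composition of the toggles along a list, applied head first. -/
def applyToggles {α : Type*} [PartialOrder α] (L : List α) (I : OIdeal α) : OIdeal α :=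
  L.foldl (fun J p => toggle p J) I

/-- The forward orbit of `x` under `Φ` (for invertible `Φ` on a finite set, the orbit). -/
def orbit {β : Type*} (Φ : β → β) (x : β) : Set β := {y | ∃ n : ℕ, Φ^[n] x = y}

/-- The probability distribution that is uniform on the orbit of `x` under `Φ` and zero
outside of it. -/
def orbitDist {β : Type*} (Φ : β → β) (x : β) : β → ℝ := fun y =>
  if y ∈ orbit Φ x then (Nat.card ↥(orbit Φ x) : ℝ)⁻¹ else 0

/-- Rowmotion on order ideals: `I ↦ {x : x ≤ y for some minimal element y of P \ I}`. -/
def rowmotion {α : Type*} [PartialOrder α] (I : OIdeal α) : OIdeal α :=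
  ⟨{x | ∃ y, (y ∉ I.1 ∧ ∀ z, z ∉ I.1 → z ≤ y → z = y) ∧ x ≤ y}, by
    intro a b hba ha
    obtain ⟨y, hy, hay⟩ := ha
    exact ⟨y, hy, le_trans hba hay⟩⟩

/-- The antichain cardinality statistic `I ↦ #max(I)`. -/
def antichainCard {α : Type*} [PartialOrder α] (I : OIdeal α) : ℝ :=
  (Nat.card {p : α // p ∈ I.1 ∧ ∀ q, q ∈ I.1 → p ≤ q → p = q} : ℝ)

end CDEPaper

namespace CDEPaper

/-!
Write `u` for the uniform expected down-degree. Each of the three distributions is a weight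
`w : α → ℕ` divided by its total, so its expected down-degree equals `u` iff the excess
`∑ p, w p * (ddeg p - u)` vanishes. Writing `A_k`, `M_m`, `H_m` for the weights of `chainDist k`,
`mchainDist m`, `mhatDist m`, one has `M_m = ∑_{k ≤ m} S(m, k) A_k`, where `S(m, k)` counts monotone
surjections `Fin (m + 1) → Fin (k + 1)` (a multichain factors uniquely as a strict chain after
such a surjection), and `H_m = ∑_{k ≤ m} M_k` (a mark that is not at the first occurrence of `p`
can be removed together with one copy of `p`). Both relations are unitriangular, so the excesses
of `A_k`, `M_k`, `H_k` vanish for all `k ≤ n` simultaneously, for every `n`; and `A_k = 0` for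
`k > r`.
-/

open Finset Function

section Unitriangular

variable {R : Type*} [Semiring R] [NoZeroDivisors R] {T : ℕ → ℕ → R} {a b : ℕ → R}

theorem forall_le_eq_zero_iff_of_unitriangular (hT : ∀ m, T m m ≠ 0)
    (hab : ∀ m, b m = ∑ k ∈ range (m + 1), T m k * a k) (n : ℕ) :
    (∀ m ≤ n, b m = 0) ↔ ∀ k ≤ n, a k = 0 := by
  refine ⟨fun hb k hk => ?_, fun ha m hm => ?_⟩
  · induction k using Nat.strong_induction_on with
    | _ k ih =>
      have hbk : b k = T k k * a k := by
        rw [hab, sum_range_succ, sum_eq_zero fun j hj => by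
          rw [ih j (mem_range.1 hj) (by grind), mul_zero], zero_add]
      exact (mul_eq_zero.1 (hbk ▸ hb k hk)).resolve_left (hT k)
  · rw [hab]
    exact sum_eq_zero fun k hk => by rw [ha k (by grind), mul_zero]

theorem forall_eq_zero_iff_of_unitriangular (hT : ∀ m, T m m ≠ 0)
    (hab : ∀ m, b m = ∑ k ∈ range (m + 1), T m k * a k) :
    (∀ m, b m = 0) ↔ ∀ k, a k = 0 :=
  ⟨fun hb k => (forall_le_eq_zero_iff_of_unitriangular hT hab k).1 (fun m _ => hb m) k le_rfl,
    fun ha m => (forall_le_eq_zero_iff_of_unitriangular hT hab m).2 (fun k _ => ha k) m le_rfl⟩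

end Unitriangular

theorem sum_mul_eq_sum_mul_sum_of_eq_sum {ι α R : Type*} [Fintype α] [Semiring R]
    {s : Finset ι} {c : ι → R} {v : ι → α → R} {w : α → R}
    (hw : ∀ p, w p = ∑ k ∈ s, c k * v k p) (g : α → R) :
    ∑ p, w p * g p = ∑ k ∈ s, c k * ∑ p, v k p * g p := by
  simp_rw [hw, sum_mul, mul_sum, mul_assoc]
  exact sum_comm

theorem expect_div_eq_iff {α : Type*} [Fintype α] (w f : α → ℝ) {Z : ℝ} (hZ : Z = ∑ p, w p)
    (hZ₀ : Z ≠ 0) (u : ℝ) :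
    expect (fun p => w p / Z) f = u ↔ ∑ p, w p * (f p - u) = 0 := by
  rw [expect, finsum_eq_sum_of_fintype]
  simp_rw [div_mul_eq_mul_div, ← sum_div, div_eq_iff hZ₀, mul_sub, sum_sub_distrib, ← sum_mul,
    ← hZ, sub_eq_zero, mul_comm Z]

theorem _root_.Monotone.image_Iic_of_surjective {β γ : Type*} [LinearOrder β] [PartialOrder γ]
    [LocallyFiniteOrderBot β] [LocallyFiniteOrderBot γ] [DecidableEq γ] {g : β → γ}
    (hg : Monotone g) (hgs : Surjective g) (i : β) : (Iic i).image g = Iic (g i) := by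
  ext y
  simp only [mem_image, mem_Iic]
  refine ⟨fun ⟨x, hx, hxy⟩ => hxy ▸ hg hx, fun hy => ?_⟩
  obtain ⟨x, rfl⟩ := hgs y
  rcases le_or_gt x i with hx | hx
  · exact ⟨x, hx, rfl⟩
  · exact ⟨i, le_rfl, le_antisymm (hg hx.le) hy⟩

section Factorization

variable {β : Type*} {m k : ℕ}

theorem card_image_Iic_comp [DecidableEq β] {s : Fin (k + 1) → β} (hs : Injective s)
    {g : Fin (m + 1) → Fin (k + 1)} (hg : Monotone g) (hgs : Surjective g) (i : Fin (m + 1)) :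
    #((Iic i).image (s ∘ g)) = g i + 1 := by
  rw [← image_image, hg.image_Iic_of_surjective hgs, card_image_of_injective _ hs, Fin.card_Iic]

theorem eq_of_comp_eq_comp_of_surjective {k₁ k₂ : ℕ} {s₁ : Fin (k₁ + 1) → β} {s₂ : Fin (k₂ + 1) → β}
    (hs₁ : Injective s₁) (hs₂ : Injective s₂) {g₁ : Fin (m + 1) → Fin (k₁ + 1)}
    {g₂ : Fin (m + 1) → Fin (k₂ + 1)} (hg₁ : Monotone g₁) (hg₂ : Monotone g₂)
    (hgs₁ : Surjective g₁) (hgs₂ : Surjective g₂) (h : s₁ ∘ g₁ = s₂ ∘ g₂) :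
    k₁ = k₂ ∧ ∀ i, (g₁ i : ℕ) = g₂ i := by
  classical
  refine ⟨?_, fun i => ?_⟩
  · have hcard := Nat.card_range_of_injective hs₁
    rw [← hgs₁.range_comp, h, hgs₂.range_comp, Nat.card_range_of_injective hs₂] at hcard
    simpa using hcard.symm
  · have hcard := card_image_Iic_comp hs₁ hg₁ hgs₁ i
    rw [h, card_image_Iic_comp hs₂ hg₂ hgs₂ i] at hcard
    omega

end Factorization

theorem exists_strictMono_comp_eq {α : Type*} [PartialOrder α] :
    ∀ {m : ℕ} (c : Fin (m + 1) → α), Monotone c →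
      ∃ (k : ℕ) (s : Fin (k + 1) → α) (g : Fin (m + 1) → Fin (k + 1)),
        StrictMono s ∧ Monotone g ∧ Surjective g ∧ s ∘ g = c
  | 0, c, _ => ⟨0, c, id, fun i j h => absurd h (by omega), monotone_id, surjective_id, rfl⟩
  | m + 1, c, hc => by
    obtain ⟨k, s, g, hs, hg, hgs, hsg⟩ :=
      exists_strictMono_comp_eq (c ∘ Fin.castSucc) (hc.comp Fin.strictMono_castSucc.monotone)
    have hle : c (Fin.last m).castSucc ≤ c (Fin.last (m + 1)) := hc (Fin.le_last _)
    rcases hle.eq_or_lt with heq | hlt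
    · refine ⟨k, s, g ∘ (Fin.last m).predAbove, hs,
        hg.comp (Fin.predAbove_right_monotone _), hgs.comp (Fin.predAbove_surjective _), ?_⟩
      ext t
      rcases Fin.eq_castSucc_or_eq_last t with ⟨t, rfl⟩ | rfl
      · simpa [Fin.predAbove_last_castSucc] using congrFun hsg t
      · simpa [← heq] using congrFun hsg (Fin.last m)
    · have hs_lt : ∀ j, s j < c (Fin.last (m + 1)) := fun j => by
        obtain ⟨t, rfl⟩ := hgs j
        have hst : s (g t) = c t.castSucc := congrFun hsg t
        exact hst ▸ lt_of_le_of_lt (hc (Fin.castSucc_le_castSucc_iff.2 (Fin.le_last t))) hlt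
      refine ⟨k + 1, Fin.snoc s (c (Fin.last (m + 1))), Fin.snoc (Fin.castSucc ∘ g) (Fin.last _),
        ?_, ?_, ?_, ?_⟩
      · simpa [Fin.insertNth_last'] using
          Fin.strictMono_insertNth_last hs _ (hs_lt (Fin.last k))
      · simpa [Fin.insertNth_last'] using
          Fin.insertNth_last_monotone (Fin.strictMono_castSucc.monotone.comp hg) _ (Fin.le_last _)
      · intro j
        rcases Fin.eq_castSucc_or_eq_last j with ⟨j, rfl⟩ | rfl
        · obtain ⟨t, rfl⟩ := hgs j
          exact ⟨t.castSucc, by simp⟩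
        · exact ⟨Fin.last _, by simp⟩
      · ext t
        rcases Fin.eq_castSucc_or_eq_last t with ⟨t, rfl⟩ | rfl
        · simpa using congrFun hsg t
        · simp

section Counts

variable (α : Type*) [PartialOrder α]

def chainCount (k : ℕ) (p : α) : ℕ :=
  Nat.card {c : Fin (k + 1) → α // StrictMono c ∧ ∃ i, c i = p}

def multichainCount (m : ℕ) (p : α) : ℕ :=
  Nat.card {c : Fin (m + 1) → α // Monotone c ∧ ∃ i, c i = p}

def markedMultichainCount (m : ℕ) (p : α) : ℕ :=
  Nat.card {ci : (Fin (m + 1) → α) × Fin (m + 1) // Monotone ci.1 ∧ ci.1 ci.2 = p}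

def monoSurjCount (m k : ℕ) : ℕ :=
  Nat.card {g : Fin (m + 1) → Fin (k + 1) // Monotone g ∧ Surjective g}

def repeatedMarkCount (m : ℕ) (p : α) : ℕ :=
  Nat.card {x : {ci : (Fin (m + 1) → α) × Fin (m + 1) // Monotone ci.1 ∧ ci.1 ci.2 = p} //
    ∃ j < x.1.2, x.1.1 j = p}

variable {α}

theorem sum_chainCount [Fintype α] (k : ℕ) :
    ∑ p, chainCount α k p = (k + 1) * Nat.card {c : Fin (k + 1) → α // StrictMono c} := by
  rw [show (k + 1) * _ = Nat.card ({c : Fin (k + 1) → α // StrictMono c} × Fin (k + 1)) by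
    rw [Nat.card_prod, Nat.card_fin, mul_comm]]
  unfold chainCount
  rw [← Nat.card_sigma]
  refine (Nat.card_eq_of_bijective (fun x => ⟨x.1.1 x.2, x.1.1, x.1.2, x.2, rfl⟩) ⟨?_, ?_⟩).symm
  · rintro ⟨⟨c, hc⟩, i⟩ ⟨⟨c', hc'⟩, i'⟩ h
    obtain rfl : c = c' := congrArg (fun x => x.2.1) h
    obtain rfl : i = i' := hc.injective (congrArg Sigma.fst h)
    rfl
  · rintro ⟨p, c, hc, i, rfl⟩
    exact ⟨(⟨c, hc⟩, i), rfl⟩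

theorem sum_multichainCount [Fintype α] (m : ℕ) :
    ∑ p, multichainCount α m p =
      Nat.card {cq : (Fin (m + 1) → α) × α // Monotone cq.1 ∧ ∃ i, cq.1 i = cq.2} := by
  unfold multichainCount
  rw [← Nat.card_sigma]
  exact Nat.card_congr
    { toFun x := ⟨(x.2.1, x.1), x.2.2⟩
      invFun x := ⟨x.1.2, x.1.1, x.2⟩ }

theorem sum_markedMultichainCount [Fintype α] (m : ℕ) :
    ∑ p, markedMultichainCount α m p = (m + 1) * Nat.card {c : Fin (m + 1) → α // Monotone c} := by
  rw [show (m + 1) * _ = Nat.card ({c : Fin (m + 1) → α // Monotone c} × Fin (m + 1)) by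
    rw [Nat.card_prod, Nat.card_fin, mul_comm]]
  unfold markedMultichainCount
  rw [← Nat.card_sigma]
  exact Nat.card_congr
    { toFun x := (⟨x.2.1.1, x.2.2.1⟩, x.2.1.2)
      invFun x := ⟨x.1.1 x.2, (x.1.1, x.2), x.1.2, rfl⟩
      left_inv := by rintro ⟨p, ⟨c, i⟩, hc, rfl⟩; rfl }

theorem chainCount_eq_zero {r k : ℕ} (hmax : ∀ c : Fin (r + 2) → α, ¬ StrictMono c) (hk : r < k)
    (p : α) : chainCount α k p = 0 := by
  rw [chainCount, Nat.card_eq_zero]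
  exact .inl ⟨fun ⟨c, hc, _⟩ =>
    hmax (c ∘ Fin.castLE (by omega)) (hc.comp (Fin.strictMono_castLE _))⟩

theorem monoSurjCount_self_pos (m : ℕ) : 0 < monoSurjCount m m :=
  Nat.card_pos_iff.2 ⟨⟨⟨id, monotone_id, surjective_id⟩⟩, inferInstance⟩

theorem multichainCount_eq_sum [Finite α] (m : ℕ) (p : α) :
    multichainCount α m p = ∑ k ∈ range (m + 1), monoSurjCount m k * chainCount α k p := by
  rw [← Fin.sum_univ_eq_sum_range (fun k => monoSurjCount m k * chainCount α k p)]
  simp only [monoSurjCount, chainCount, ← Nat.card_prod]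
  rw [← Nat.card_sigma]
  refine (Nat.card_eq_of_bijective (fun x => ⟨x.2.2.1 ∘ x.2.1.1,
    x.2.2.2.1.monotone.comp x.2.1.2.1, by
      obtain ⟨j, hj⟩ := x.2.2.2.2
      obtain ⟨i, rfl⟩ := x.2.1.2.2 j
      exact ⟨i, hj⟩⟩) ⟨?_, ?_⟩).symm
  · rintro ⟨k₁, ⟨g₁, hg₁, hgs₁⟩, ⟨s₁, hs₁, _⟩⟩ ⟨k₂, ⟨g₂, hg₂, hgs₂⟩, ⟨s₂, hs₂, _⟩⟩ h
    have hsg : s₁ ∘ g₁ = s₂ ∘ g₂ := congrArg Subtype.val h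
    obtain ⟨hk, hg⟩ :=
      eq_of_comp_eq_comp_of_surjective hs₁.injective hs₂.injective hg₁ hg₂ hgs₁ hgs₂ hsg
    obtain rfl : k₁ = k₂ := Fin.ext hk
    obtain rfl : g₁ = g₂ := funext fun i => Fin.ext (hg i)
    obtain rfl : s₁ = s₂ := hgs₁.injective_comp_right hsg
    rfl
  · rintro ⟨c, hc, i, rfl⟩
    obtain ⟨k, s, g, hs, hg, hgs, rfl⟩ := exists_strictMono_comp_eq c hc
    have hk : k < m + 1 := by simpa using Fintype.card_le_of_surjective g hgs
    exact ⟨⟨⟨k, hk⟩, ⟨g, hg, hgs⟩, ⟨s, hs, g i, rfl⟩⟩, rfl⟩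

theorem markedMultichainCount_eq_add [Finite α] (m : ℕ) (p : α) :
    markedMultichainCount α m p = multichainCount α m p + repeatedMarkCount α m p := by
  rw [markedMultichainCount, repeatedMarkCount, ← Nat.card_congr (Equiv.sumCompl fun x :
    {ci : (Fin (m + 1) → α) × Fin (m + 1) // Monotone ci.1 ∧ ci.1 ci.2 = p} =>
      ∃ j < x.1.2, x.1.1 j = p), Nat.card_sum, add_comm]
  congr 1
  refine Nat.card_eq_of_bijective (fun x => ⟨x.1.1.1, x.1.2.1, x.1.1.2, x.1.2.2⟩) ⟨?_, ?_⟩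
  · rintro ⟨⟨⟨c, i⟩, hc, hi⟩, hfirst⟩ ⟨⟨⟨c', i'⟩, hc', hi'⟩, hfirst'⟩ h
    obtain rfl : c = c' := congrArg Subtype.val h
    obtain rfl : i = i' := by
      rcases lt_trichotomy i i' with hlt | heq | hgt
      · exact (hfirst' ⟨i, hlt, hi⟩).elim
      · exact heq
      · exact (hfirst ⟨i', hgt, hi'⟩).elim
    rfl
  · rintro ⟨c, hc, hex⟩
    obtain ⟨i, hi, hmin⟩ := WellFounded.has_min wellFounded_lt {i | c i = p} hex
    exact ⟨⟨⟨(c, i), hc, hi⟩, fun ⟨j, hj, hcj⟩ => hmin j hcj hj⟩, rfl⟩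

theorem repeatedMarkCount_zero (p : α) : repeatedMarkCount α 0 p = 0 := by
  simp [repeatedMarkCount, Fin.lt_def]

theorem repeatedMarkCount_succ [Finite α] (m : ℕ) (p : α) :
    repeatedMarkCount α (m + 1) p = markedMultichainCount α m p := by
  symm
  -- double the marked entry `c j` and move the mark to the second copy
  refine Nat.card_eq_of_bijective (fun x => ⟨⟨(x.1.1 ∘ x.1.2.predAbove, x.1.2.succ),
    x.2.1.comp (Fin.predAbove_right_monotone _), by simpa using x.2.2⟩,
    x.1.2.castSucc, Fin.castSucc_lt_succ, by simpa using x.2.2⟩) ⟨?_, ?_⟩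
  · rintro ⟨⟨c₁, j₁⟩, hc₁, hj₁⟩ ⟨⟨c₂, j₂⟩, hc₂, hj₂⟩ h
    have h' := congrArg (fun x => x.1.1) h
    simp only [Prod.mk.injEq, Fin.succ_inj] at h'
    obtain ⟨hc, rfl⟩ := h'
    obtain rfl : c₁ = c₂ := (Fin.predAbove_surjective j₁).injective_comp_right hc
    rfl
  · rintro ⟨⟨⟨c, i⟩, hc, hci⟩, j₀, hj₀, hcj₀⟩
    dsimp only at hc hci hj₀ hcj₀
    obtain ⟨j, rfl⟩ := Fin.exists_succ_eq.2 (Fin.ne_zero_of_lt hj₀)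
    have hcj : c j.castSucc = p := le_antisymm (hci ▸ hc (Fin.castSucc_le_succ j))
      (hcj₀ ▸ hc (Fin.le_castSucc_iff.2 hj₀))
    refine ⟨⟨(c ∘ j.castSucc.succAbove, j), hc.comp (Fin.strictMono_succAbove _).monotone,
      by simpa using hci⟩, ?_⟩
    have hsplit : (c ∘ j.castSucc.succAbove) ∘ j.predAbove = c := by
      ext t
      by_cases ht : t = j.castSucc
      · simp [ht, hcj, hci]
      · simp [Fin.succAbove_predAbove ht]
    exact Subtype.ext (Subtype.ext (Prod.ext hsplit rfl))

theorem markedMultichainCount_eq_sum [Finite α] (m : ℕ) (p : α) :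
    markedMultichainCount α m p = ∑ k ∈ range (m + 1), multichainCount α k p := by
  induction m with
  | zero => rw [markedMultichainCount_eq_add, repeatedMarkCount_zero, sum_range_one, add_zero]
  | succ m ih =>
    rw [markedMultichainCount_eq_add, repeatedMarkCount_succ, ih, sum_range_succ _ (m + 1),
      add_comm]

end Counts

section Expectations

variable {α : Type*} [PartialOrder α] [Fintype α] (f : α → ℝ) (u : ℝ)

theorem expect_chainDist_eq_iff {k : ℕ} (hk : ∃ c : Fin (k + 1) → α, StrictMono c) :
    expect (chainDist α k) f = u ↔ ∑ p, (chainCount α k p : ℝ) * (f p - u) = 0 := by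
  obtain ⟨c, hc⟩ := hk
  have hN : Nat.card {c : Fin (k + 1) → α // StrictMono c} ≠ 0 :=
    (Nat.card_pos_iff.2 ⟨⟨⟨c, hc⟩⟩, inferInstance⟩).ne'
  refine expect_div_eq_iff (fun p => (chainCount α k p : ℝ)) f ?_ (by positivity) u
  rw [← Nat.cast_sum, sum_chainCount]
  push_cast
  rfl

theorem expect_mchainDist_eq_iff [Nonempty α] (m : ℕ) :
    expect (mchainDist α m) f = u ↔ ∑ p, (multichainCount α m p : ℝ) * (f p - u) = 0 := by
  obtain ⟨p⟩ := ‹Nonempty α›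
  refine expect_div_eq_iff (fun p => (multichainCount α m p : ℝ)) f
    (by rw [← Nat.cast_sum, sum_multichainCount]) ?_ u
  exact Nat.cast_ne_zero.2
    (Nat.card_pos_iff.2 ⟨⟨⟨(fun _ => p, p), monotone_const, 0, rfl⟩⟩, inferInstance⟩).ne'

theorem expect_mhatDist_eq_iff [Nonempty α] (m : ℕ) :
    expect (mhatDist α m) f = u ↔ ∑ p, (markedMultichainCount α m p : ℝ) * (f p - u) = 0 := by
  obtain ⟨p⟩ := ‹Nonempty α›
  have hN : Nat.card {c : Fin (m + 1) → α // Monotone c} ≠ 0 :=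
    (Nat.card_pos_iff.2 ⟨⟨⟨fun _ => p, monotone_const⟩⟩, inferInstance⟩).ne'
  refine expect_div_eq_iff (fun p => (markedMultichainCount α m p : ℝ)) f ?_ (by positivity) u
  rw [← Nat.cast_sum, sum_markedMultichainCount]
  push_cast
  rfl

end Expectations

/-- Proposition `prop:mcde`.  Let `P` be a finite poset in which the longest
chains have length `r`.  Then the following are equivalent:
(1) `E(chain(k); ddeg) = E(uni; ddeg)` for all `k = 0, 1, …, r`;
(2) `E(mchain(m); ddeg) = E(uni; ddeg)` for all `m ≥ 0`;
(3) `E(mchain(m); ddeg) = E(uni; ddeg)` for all `m = 0, 1, …, r`;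
(4) `E(m̂chain(m); ddeg) = E(uni; ddeg)` for all `m ≥ 0`;
(5) `E(m̂chain(m); ddeg) = E(uni; ddeg)` for all `m = 0, 1, …, r`. -/
theorem statement0 (α : Type*) [Finite α] [PartialOrder α] (r : ℕ)
    (hex : ∃ c : Fin (r + 1) → α, StrictMono c)
    (hmax : ∀ c : Fin (r + 2) → α, ¬ StrictMono c) :
    List.TFAE
      [∀ k : ℕ, k ≤ r → expect (chainDist α k) ddeg = expect (uni α) ddeg,
       ∀ m : ℕ, expect (mchainDist α m) ddeg = expect (uni α) ddeg,
       ∀ m : ℕ, m ≤ r → expect (mchainDist α m) ddeg = expect (uni α) ddeg,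
       ∀ m : ℕ, expect (mhatDist α m) ddeg = expect (uni α) ddeg,
       ∀ m : ℕ, m ≤ r → expect (mhatDist α m) ddeg = expect (uni α) ddeg] := by
  have := Fintype.ofFinite α
  obtain ⟨c, hc⟩ := hex
  have : Nonempty α := ⟨c 0⟩
  set u := expect (uni α) ddeg
  set chainEx : ℕ → ℝ := fun k => ∑ p, (chainCount α k p : ℝ) * (ddeg p - u)
  set multiEx : ℕ → ℝ := fun m => ∑ p, (multichainCount α m p : ℝ) * (ddeg p - u)
  set markedEx : ℕ → ℝ := fun m => ∑ p, (markedMultichainCount α m p : ℝ) * (ddeg p - u)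
  have hS : ∀ m, (monoSurjCount m m : ℝ) ≠ 0 := fun m => by
    exact_mod_cast (monoSurjCount_self_pos m).ne'
  have hmulti : ∀ m, multiEx m = ∑ k ∈ range (m + 1), (monoSurjCount m k : ℝ) * chainEx k :=
    fun m => sum_mul_eq_sum_mul_sum_of_eq_sum
      (fun p => by exact_mod_cast multichainCount_eq_sum m p) _
  have hmarked : ∀ m, markedEx m = ∑ k ∈ range (m + 1), 1 * multiEx k := fun m =>
    sum_mul_eq_sum_mul_sum_of_eq_sum (fun p => by simp [markedMultichainCount_eq_sum m p]) _
  have hchain : (∀ k ≤ r, chainEx k = 0) ↔ ∀ k, chainEx k = 0 :=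
    ⟨fun h k => (le_or_gt k r).elim (h k) fun hk => by simp [chainEx, chainCount_eq_zero hmax hk],
      fun h k _ => h k⟩
  simp only [expect_mchainDist_eq_iff, expect_mhatDist_eq_iff]
  tfae_have 1 ↔ 3 := by
    rw [forall₂_congr fun k hk => expect_chainDist_eq_iff ddeg u
      ⟨c ∘ Fin.castLE (by omega), hc.comp (Fin.strictMono_castLE _)⟩]
    exact (forall_le_eq_zero_iff_of_unitriangular hS hmulti r).symm
  tfae_have 2 ↔ 3 := by
    rw [forall_eq_zero_iff_of_unitriangular hS hmulti, ← hchain,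
      forall_le_eq_zero_iff_of_unitriangular hS hmulti r]
  tfae_have 4 ↔ 2 := forall_eq_zero_iff_of_unitriangular (fun _ => one_ne_zero) hmarked
  tfae_have 5 ↔ 3 := forall_le_eq_zero_iff_of_unitriangular (fun _ => one_ne_zero) hmarked r
  tfae_finish

end CDEPaper
end
end

section
/- Let P and Q be finite posets with E(uni_P; ddeg) = E(uni_Q; ddeg). If P and Q are both CDE then their disjoint union P + Q is also CDE. Similarly, if P and Q are both mCDE then P + Q is also mCDE. -/
/-! Each of the uniform, `k`-chain and maximal-chain distributions gives a point `p`
probability `N p / ∑ N` for a count `N` (namely `1`, the number of `k`-chains through `p`, the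
number of maximal chains through `p`). In `P + Q` every chain lies in one summand and covers never
cross summands, so `N` and `ddeg` on `P + Q` restrict to those of `P` and `Q`. The `N`-weighted
mean `(∑ N · ddeg) / ∑ N` therefore has additive numerator and denominator, and if it equals `e`
on both summands it equals `e` on `P + Q`. With `e` the common uniform mean, this applies to
the uniform distribution and, under CDE resp. mCDE, to the maximal-chain resp. `k`-chain
distributions. -/

open scoped Classical

noncomputable section

namespace CDEPaper

section Counts

variable {γ : Type*} [PartialOrder γ]

def numMaxChainsThrough (p : γ) : ℕ :=
  Nat.card {C : Set γ // IsMaxChain (· ≤ ·) C ∧ p ∈ C}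

def numChainsThrough (k : ℕ) (p : γ) : ℕ :=
  Nat.card {c : Fin (k + 1) → γ // StrictMono c ∧ ∃ i, c i = p}

end Counts

/-- `uni`, `chainDist` and `maxchainDist` are all of this form. -/
def countDist {γ : Type*} [Fintype γ] (N : γ → ℕ) : γ → ℝ :=
  fun p => (N p : ℝ) / ∑ q, (N q : ℝ)

section CountDist

variable {γ : Type*} [Fintype γ]

lemma expect_eq_sum (μ f : γ → ℝ) : expect μ f = ∑ p, μ p * f p :=
  finsum_eq_sum_of_fintype _

lemma expect_countDist (N : γ → ℕ) (f : γ → ℝ) :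
    expect (countDist N) f = (∑ p, (N p : ℝ) * f p) / ∑ p, (N p : ℝ) := by
  rw [expect_eq_sum, Finset.sum_div]
  exact Finset.sum_congr rfl fun p _ => div_mul_eq_mul_div _ _ _

lemma sum_mul_eq_of_expect_countDist {N : γ → ℕ} {f : γ → ℝ} {e : ℝ}
    (h : ∑ p, (N p : ℝ) ≠ 0 → expect (countDist N) f = e) :
    ∑ p, (N p : ℝ) * f p = (∑ p, (N p : ℝ)) * e := by
  by_cases hN : ∑ p, (N p : ℝ) = 0
  · have hN0 : ∀ p, (N p : ℝ) = 0 := fun p =>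
      (Finset.sum_eq_zero_iff_of_nonneg fun q _ => Nat.cast_nonneg (N q)).1 hN p
        (Finset.mem_univ p)
    simp [hN0]
  · rw [← h hN, expect_countDist, mul_div_cancel₀ _ hN]

lemma uni_eq_countDist : uni γ = countDist fun _ => 1 := by
  ext p
  simp [uni, countDist, Nat.card_eq_fintype_card]

lemma expect_countDist_sumElim {α β : Type*} [Fintype α] [Fintype β]
    {Nα : α → ℕ} {Nβ : β → ℕ} {fα : α → ℝ} {fβ : β → ℝ} {e : ℝ}
    (hα : ∑ a, (Nα a : ℝ) * fα a = (∑ a, (Nα a : ℝ)) * e)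
    (hβ : ∑ b, (Nβ b : ℝ) * fβ b = (∑ b, (Nβ b : ℝ)) * e)
    (p : α ⊕ β) (hp : Sum.elim Nα Nβ p ≠ 0) :
    expect (countDist (Sum.elim Nα Nβ)) (Sum.elim fα fβ) = e := by
  have hpos : 0 < ∑ q, ((Sum.elim Nα Nβ q : ℕ) : ℝ) :=
    Finset.sum_pos' (fun q _ => Nat.cast_nonneg _) ⟨p, Finset.mem_univ p, by positivity⟩
  rw [Fintype.sum_sum_type] at hpos
  rw [expect_countDist, Fintype.sum_sum_type, Fintype.sum_sum_type]
  simp only [Sum.elim_inl, Sum.elim_inr] at hpos ⊢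
  rw [hα, hβ, ← add_mul, mul_div_cancel_left₀ _ hpos.ne']

end CountDist

section DoubleCounting

variable {γ : Type*} [Fintype γ] [PartialOrder γ]

lemma sum_numMaxChainsThrough :
    ∑ p : γ, numMaxChainsThrough p
      = Nat.card {Cq : Set γ × γ // IsMaxChain (· ≤ ·) Cq.1 ∧ Cq.2 ∈ Cq.1} := by
  simp only [numMaxChainsThrough]
  rw [← Nat.card_sigma]
  exact Nat.card_congr ((Equiv.subtypeProdEquivSigmaSubtype
    fun p (C : Set γ) => IsMaxChain (· ≤ ·) C ∧ p ∈ C).symm.trans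
    (Equiv.subtypeEquiv (Equiv.prodComm _ _) fun _ => Iff.rfl))

/-- A `k`-chain passes through exactly `k + 1` points, being injective. -/
lemma sum_numChainsThrough (k : ℕ) :
    ∑ p : γ, numChainsThrough k p
      = (k + 1) * Nat.card {c : Fin (k + 1) → γ // StrictMono c} := by
  let pointOn (ci : {c : Fin (k + 1) → γ // StrictMono c} × Fin (k + 1)) :
      {x : γ × (Fin (k + 1) → γ) // StrictMono x.2 ∧ ∃ i, x.2 i = x.1} :=
    ⟨(ci.1.1 ci.2, ci.1.1), ci.1.2, ci.2, rfl⟩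
  have hbij : Function.Bijective pointOn := by
    refine ⟨?_, ?_⟩
    · rintro ⟨⟨c, hc⟩, i⟩ ⟨⟨c', hc'⟩, i'⟩ h
      simp only [pointOn, Subtype.mk.injEq, Prod.mk.injEq] at h
      obtain ⟨hi, rfl⟩ := h
      exact Prod.ext rfl (hc.injective hi)
    · rintro ⟨⟨p, c⟩, hc, i, hi⟩
      obtain rfl : c i = p := hi
      exact ⟨(⟨c, hc⟩, i), rfl⟩
  calc ∑ p : γ, numChainsThrough k p
      = Nat.card ({c : Fin (k + 1) → γ // StrictMono c} × Fin (k + 1)) := by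
        simp only [numChainsThrough]
        rw [← Nat.card_sigma]
        exact Nat.card_congr ((Equiv.ofBijective pointOn hbij).trans
          (Equiv.subtypeProdEquivSigmaSubtype fun p c => StrictMono c ∧ ∃ i, c i = p)).symm
    _ = (k + 1) * Nat.card {c : Fin (k + 1) → γ // StrictMono c} := by
        rw [Nat.card_prod, Nat.card_fin, mul_comm]

lemma maxchainDist_eq_countDist : maxchainDist γ = countDist numMaxChainsThrough := by
  ext p
  rw [countDist, ← Nat.cast_sum, sum_numMaxChainsThrough]
  rfl

lemma chainDist_eq_countDist (k : ℕ) : chainDist γ k = countDist (numChainsThrough k) := by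
  ext p
  rw [countDist, ← Nat.cast_sum, sum_numChainsThrough]
  push_cast
  rfl

end DoubleCounting

section Component

variable {α γ : Type*} [PartialOrder α] [PartialOrder γ] (f : α ↪o γ)

lemma mem_range_of_le_or_ge (hU : IsUpperSet (Set.range f)) (hL : IsLowerSet (Set.range f))
    {a : α} {x : γ} (h : x ≤ f a ∨ f a ≤ x) : x ∈ Set.range f :=
  h.elim (fun h => hL h ⟨a, rfl⟩) (fun h => hU h ⟨a, rfl⟩)

lemma IsChain.subset_range (hU : IsUpperSet (Set.range f)) (hL : IsLowerSet (Set.range f))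
    {C : Set γ} (hC : IsChain (· ≤ ·) C) {a : α} (ha : f a ∈ C) : C ⊆ Set.range f := by
  intro x hx
  rcases eq_or_ne x (f a) with rfl | hne
  · exact ⟨a, rfl⟩
  · exact mem_range_of_le_or_ge f hU hL (hC hx ha hne)

lemma ddeg_apply (hL : IsLowerSet (Set.range f)) (a : α) : ddeg (f a) = ddeg a := by
  have hcov {q : α} : f q ⋖ f a ↔ q ⋖ a := hL.ordConnected.apply_covBy_apply_iff f
  unfold ddeg
  congr 1
  refine (Nat.card_eq_of_bijective
    (fun q : {q // q ⋖ a} => (⟨f q, hcov.2 q.2⟩ : {x // x ⋖ f a})) ⟨?_, ?_⟩).symm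
  · intro q q' h
    exact Subtype.ext (f.injective (congrArg Subtype.val h))
  · rintro ⟨x, hx⟩
    obtain ⟨q, rfl⟩ := hL hx.le ⟨a, rfl⟩
    exact ⟨⟨q, hcov.1 hx⟩, rfl⟩

lemma numChainsThrough_apply (hU : IsUpperSet (Set.range f)) (hL : IsLowerSet (Set.range f))
    (k : ℕ) (a : α) : numChainsThrough k (f a) = numChainsThrough k a := by
  refine (Nat.card_eq_of_bijective
    (fun c : {c : Fin (k + 1) → α // StrictMono c ∧ ∃ i, c i = a} =>
      (⟨f ∘ c.1, f.strictMono.comp c.2.1, c.2.2.imp fun _ hi => congrArg f hi⟩ :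
        {c : Fin (k + 1) → γ // StrictMono c ∧ ∃ i, c i = f a})) ⟨?_, ?_⟩).symm
  · intro c c' h
    exact Subtype.ext (funext fun i => f.injective (congrFun (congrArg Subtype.val h) i))
  · rintro ⟨c, hc, i, hi⟩
    have hrange (j : Fin (k + 1)) : c j ∈ Set.range f :=
      mem_range_of_le_or_ge f hU hL (a := a) <| by
        rw [← hi]
        exact (le_total j i).imp (fun h => hc.monotone h) (fun h => hc.monotone h)
    choose d hd using hrange
    obtain rfl : f ∘ d = c := funext hd
    exact ⟨⟨d, fun j j' h => f.lt_iff_lt.1 (hc h), i, f.injective hi⟩, rfl⟩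

lemma IsMaxChain.image_of_mem (hU : IsUpperSet (Set.range f)) (hL : IsLowerSet (Set.range f))
    {D : Set α} (hD : IsMaxChain (· ≤ ·) D) {a : α} (ha : a ∈ D) :
    IsMaxChain (· ≤ ·) (f '' D) := by
  refine ⟨f.monotone.isChain_image hD.1, fun T hT hDT => ?_⟩
  have hTf : T ⊆ Set.range f := IsChain.subset_range f hU hL hT (hDT ⟨a, ha, rfl⟩)
  have hDT' : D = f ⁻¹' T :=
    hD.2 (hT.preimage _ _ f f.injective fun _ _ => f.le_iff_le.1) fun x hx => hDT ⟨x, hx, rfl⟩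
  rw [hDT', Set.image_preimage_eq_of_subset hTf]

lemma IsMaxChain.preimage_of_mem (hU : IsUpperSet (Set.range f)) (hL : IsLowerSet (Set.range f))
    {C : Set γ} (hC : IsMaxChain (· ≤ ·) C) {a : α} (ha : f a ∈ C) :
    IsMaxChain (· ≤ ·) (f ⁻¹' C) := by
  have hCf := Set.image_preimage_eq_of_subset (IsChain.subset_range f hU hL hC.1 ha)
  refine ⟨hC.1.preimage _ _ f f.injective fun _ _ => f.le_iff_le.1, fun T hT hCT => ?_⟩
  have hCT' : C = f '' T :=
    hC.2 (f.monotone.isChain_image hT) (hCf.symm.trans_subset (Set.image_mono hCT))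
  refine hCT.antisymm fun x hx => ?_
  rw [Set.mem_preimage, hCT']
  exact ⟨x, hx, rfl⟩

lemma numMaxChainsThrough_apply (hU : IsUpperSet (Set.range f))
    (hL : IsLowerSet (Set.range f)) (a : α) :
    numMaxChainsThrough (f a) = numMaxChainsThrough a := by
  refine (Nat.card_eq_of_bijective
    (fun D : {D : Set α // IsMaxChain (· ≤ ·) D ∧ a ∈ D} =>
      (⟨f '' D.1, IsMaxChain.image_of_mem f hU hL D.2.1 D.2.2, a, D.2.2, rfl⟩ :
        {C : Set γ // IsMaxChain (· ≤ ·) C ∧ f a ∈ C})) ⟨?_, ?_⟩).symm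
  · intro D D' h
    exact Subtype.ext (Set.image_injective.2 f.injective (congrArg Subtype.val h))
  · rintro ⟨C, hC, ha⟩
    exact ⟨⟨f ⁻¹' C, IsMaxChain.preimage_of_mem f hU hL hC ha, ha⟩,
      Subtype.ext (Set.image_preimage_eq_of_subset (IsChain.subset_range f hU hL hC.1 ha))⟩

end Component

section DisjointUnion

variable {α β : Type*} [PartialOrder α] [PartialOrder β]

def inlOrderEmbedding : α ↪o α ⊕ β :=
  .ofMapLEIff Sum.inl fun _ _ => Sum.inl_le_inl_iff

def inrOrderEmbedding : β ↪o α ⊕ β :=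
  .ofMapLEIff Sum.inr fun _ _ => Sum.inr_le_inr_iff

lemma isUpperSet_range_inl : IsUpperSet (Set.range (Sum.inl : α → α ⊕ β)) := by
  rintro _ (b | b) h ⟨a, rfl⟩
  · exact ⟨b, rfl⟩
  · exact absurd h Sum.not_inl_le_inr

lemma isLowerSet_range_inl : IsLowerSet (Set.range (Sum.inl : α → α ⊕ β)) := by
  rintro _ (b | b) h ⟨a, rfl⟩
  · exact ⟨b, rfl⟩
  · exact absurd h Sum.not_inr_le_inl

lemma isUpperSet_range_inr : IsUpperSet (Set.range (Sum.inr : β → α ⊕ β)) := by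
  rintro _ (b | b) h ⟨a, rfl⟩
  · exact absurd h Sum.not_inr_le_inl
  · exact ⟨b, rfl⟩

lemma isLowerSet_range_inr : IsLowerSet (Set.range (Sum.inr : β → α ⊕ β)) := by
  rintro _ (b | b) h ⟨a, rfl⟩
  · exact absurd h Sum.not_inl_le_inr
  · exact ⟨b, rfl⟩

lemma ddeg_sum : (ddeg : α ⊕ β → ℝ) = Sum.elim ddeg ddeg := by
  ext (a | b)
  · exact ddeg_apply (inlOrderEmbedding : α ↪o α ⊕ β) isLowerSet_range_inl a
  · exact ddeg_apply (inrOrderEmbedding : β ↪o α ⊕ β) isLowerSet_range_inr b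

lemma numChainsThrough_sum (k : ℕ) :
    (numChainsThrough k : α ⊕ β → ℕ)
      = Sum.elim (numChainsThrough k) (numChainsThrough k) := by
  ext (a | b)
  · exact numChainsThrough_apply (inlOrderEmbedding : α ↪o α ⊕ β)
      isUpperSet_range_inl isLowerSet_range_inl k a
  · exact numChainsThrough_apply (inrOrderEmbedding : β ↪o α ⊕ β)
      isUpperSet_range_inr isLowerSet_range_inr k b

lemma numMaxChainsThrough_sum :
    (numMaxChainsThrough : α ⊕ β → ℕ)
      = Sum.elim numMaxChainsThrough numMaxChainsThrough := by
  ext (a | b)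
  · exact numMaxChainsThrough_apply (inlOrderEmbedding : α ↪o α ⊕ β)
      isUpperSet_range_inl isLowerSet_range_inl a
  · exact numMaxChainsThrough_apply (inrOrderEmbedding : β ↪o α ⊕ β)
      isUpperSet_range_inr isLowerSet_range_inr b

end DisjointUnion

section Existence

variable {γ : Type*} [Finite γ] [PartialOrder γ]

lemma numMaxChainsThrough_pos (p : γ) : 0 < numMaxChainsThrough p := by
  obtain ⟨M, hM, hpM⟩ := (IsChain.singleton : IsChain (· ≤ ·) {p}).exists_maxChain
  have : Nonempty {C : Set γ // IsMaxChain (· ≤ ·) C ∧ p ∈ C} := ⟨⟨M, hM, hpM rfl⟩⟩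
  exact Nat.card_pos

lemma numChainsThrough_pos {k : ℕ} {c : Fin (k + 1) → γ} (hc : StrictMono c)
    (i : Fin (k + 1)) : 0 < numChainsThrough k (c i) := by
  have : Nonempty {c' : Fin (k + 1) → γ // StrictMono c' ∧ ∃ j, c' j = c i} :=
    ⟨⟨c, hc, i, rfl⟩⟩
  exact Nat.card_pos

end Existence

section WeightedSums

variable {γ : Type*} [Fintype γ] [PartialOrder γ]

lemma sum_one_mul_ddeg :
    ∑ p : γ, ((1 : ℕ) : ℝ) * ddeg p
      = (∑ _p : γ, ((1 : ℕ) : ℝ)) * expect (uni γ) ddeg :=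
  sum_mul_eq_of_expect_countDist fun _ => by rw [uni_eq_countDist]

lemma IsCDE.sum_mul_ddeg (h : IsCDE γ) :
    ∑ p : γ, (numMaxChainsThrough p : ℝ) * ddeg p
      = (∑ p : γ, (numMaxChainsThrough p : ℝ)) * expect (uni γ) ddeg :=
  sum_mul_eq_of_expect_countDist fun _ => by rw [← maxchainDist_eq_countDist]; exact h

lemma IsMCDE.sum_mul_ddeg (h : IsMCDE γ) (k : ℕ) :
    ∑ p : γ, (numChainsThrough k p : ℝ) * ddeg p
      = (∑ p : γ, (numChainsThrough k p : ℝ)) * expect (uni γ) ddeg := by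
  refine sum_mul_eq_of_expect_countDist fun hne => ?_
  rw [← Nat.cast_sum, sum_numChainsThrough, Nat.cast_ne_zero] at hne
  obtain ⟨⟨c, hc⟩⟩ := (Nat.card_ne_zero.1 (right_ne_zero_of_mul hne)).1
  rw [← chainDist_eq_countDist]
  exact h k ⟨c, hc⟩

end WeightedSums

/-- Let `P` and `Q` be finite posets with the same edge density
`E(uni_P; ddeg) = E(uni_Q; ddeg)`.  If `P` and `Q` are both CDE then the disjoint union
`P + Q` is also CDE; similarly, if `P` and `Q` are both mCDE then `P + Q` is also mCDE. -/
theorem statement1 (α β : Type*) [Finite α] [PartialOrder α] [Finite β] [PartialOrder β]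
    (h : expect (uni α) ddeg = expect (uni β) ddeg) :
    (IsCDE α → IsCDE β → IsCDE (α ⊕ β)) ∧ (IsMCDE α → IsMCDE β → IsMCDE (α ⊕ β)) := by
  have := Fintype.ofFinite α
  have := Fintype.ofFinite β
  have huni (p : α ⊕ β) : expect (uni (α ⊕ β)) ddeg = expect (uni α) ddeg := by
    rw [uni_eq_countDist, ← Sum.elim_lam_const_lam_const, ddeg_sum]
    exact expect_countDist_sumElim sum_one_mul_ddeg (h ▸ sum_one_mul_ddeg) p
      (by cases p <;> exact one_ne_zero)
  refine ⟨fun hα hβ => ?_, fun hα hβ k ⟨c, hc⟩ => ?_⟩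
  · rcases isEmpty_or_nonempty (α ⊕ β) with _ | hne
    · simp [IsCDE, expect, finsum_of_isEmpty]
    obtain ⟨p⟩ := hne
    rw [IsCDE, huni p, maxchainDist_eq_countDist, numMaxChainsThrough_sum, ddeg_sum]
    refine expect_countDist_sumElim hα.sum_mul_ddeg (h ▸ hβ.sum_mul_ddeg) p ?_
    rw [← numMaxChainsThrough_sum]
    exact (numMaxChainsThrough_pos p).ne'
  · rw [huni (c 0), chainDist_eq_countDist, numChainsThrough_sum, ddeg_sum]
    refine expect_countDist_sumElim (IsMCDE.sum_mul_ddeg hα k)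
      (h ▸ IsMCDE.sum_mul_ddeg hβ k) (c 0) ?_
    rw [← numChainsThrough_sum]
    exact (numChainsThrough_pos hc 0).ne'

end CDEPaper
end
end

section
/- Let P be a finite poset. For any m ≥ 0, the modified m-multichain distribution m̂chain(m) on the distributive lattice J(P) of order ideals of P is toggle-symmetric. -/
open scoped Classical

noncomputable section

namespace CDEPaper

section ToggleBijAux

variable {α : Type*} [PartialOrder α]

lemma oi_le_subset {I J : OIdeal α} (h : I ≤ J) : I.1 ⊆ J.1 := h

lemma lower_union_of (p : α) {I J : OIdeal α} (h : IsLowerSet (I.1 ∪ {p}))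
    (hIJ : I ≤ J) : IsLowerSet (J.1 ∪ {p}) := by
  intro a b hba ha
  rcases ha with ha | ha
  · exact Or.inl (J.2 hba ha)
  · rcases h hba (Or.inr ha) with hb | hb
    · exact Or.inl (oi_le_subset hIJ hb)
    · exact Or.inr hb

lemma lower_diff_of (p : α) {I J : OIdeal α} (h : IsLowerSet (J.1 \ {p}))
    (hIJ : I ≤ J) : IsLowerSet (I.1 \ {p}) := by
  intro a b hba ha
  refine ⟨I.2 hba ha.1, fun hb => ?_⟩
  have hb' : b = p := hb
  have : p ∈ J.1 \ {p} := h (hb' ▸ hba) ⟨oi_le_subset hIJ ha.1, ha.2⟩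
  exact this.2 rfl

variable (p : α) {m : ℕ}

/-- The forward map: add `p` to all ideals from position `i` on; new index is the last
position whose ideal does not contain `p`. -/
noncomputable def fwdFun
    (x : {ci : (Fin (m + 1) → OIdeal α) × Fin (m + 1) //
      Monotone ci.1 ∧ p ∉ (ci.1 ci.2).1 ∧ IsLowerSet ((ci.1 ci.2).1 ∪ {p})}) :
    (Fin (m + 1) → OIdeal α) × Fin (m + 1) :=
  (fun k => if hik : x.1.2 ≤ k then
      ⟨(x.1.1 k).1 ∪ {p}, lower_union_of p x.2.2.2 (x.2.1 hik)⟩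
    else x.1.1 k,
   (Finset.univ.filter (fun k => p ∉ (x.1.1 k).1)).max'
     ⟨x.1.2, Finset.mem_filter.2 ⟨Finset.mem_univ _, x.2.2.1⟩⟩)

/-- The backward map: remove `p` from all ideals up to position `j`; new index is the first
position whose ideal contains `p`. -/
noncomputable def bwdFun
    (y : {ci : (Fin (m + 1) → OIdeal α) × Fin (m + 1) //
      Monotone ci.1 ∧ p ∈ (ci.1 ci.2).1 ∧ IsLowerSet ((ci.1 ci.2).1 \ {p})}) :
    (Fin (m + 1) → OIdeal α) × Fin (m + 1) :=
  (fun k => if hk : k ≤ y.1.2 then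
      ⟨(y.1.1 k).1 \ {p}, lower_diff_of p y.2.2.2 (y.2.1 hk)⟩
    else y.1.1 k,
   (Finset.univ.filter (fun k => p ∈ (y.1.1 k).1)).min'
     ⟨y.1.2, Finset.mem_filter.2 ⟨Finset.mem_univ _, y.2.2.1⟩⟩)

lemma fwd_prop
    (x : {ci : (Fin (m + 1) → OIdeal α) × Fin (m + 1) //
      Monotone ci.1 ∧ p ∉ (ci.1 ci.2).1 ∧ IsLowerSet ((ci.1 ci.2).1 ∪ {p})}) :
    Monotone (fwdFun p x).1 ∧ p ∈ ((fwdFun p x).1 (fwdFun p x).2).1 ∧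
      IsLowerSet (((fwdFun p x).1 (fwdFun p x).2).1 \ {p}) := by
  obtain ⟨⟨c, i⟩, hm, hpi, hl⟩ := x
  set S := Finset.univ.filter (fun k => p ∉ (c k).1) with hS
  have hiS : i ∈ S := Finset.mem_filter.2 ⟨Finset.mem_univ _, hpi⟩
  set i' := S.max' ⟨i, hiS⟩ with hi'
  have hii' : i ≤ i' := Finset.le_max' S i hiS
  have hpi' : p ∉ (c i').1 := (Finset.mem_filter.1 (S.max'_mem ⟨i, hiS⟩)).2
  refine ⟨?_, ?_, ?_⟩
  · intro k l hkl
    show (fwdFun p ⟨⟨c, i⟩, hm, hpi, hl⟩).1 k ≤ (fwdFun p ⟨⟨c, i⟩, hm, hpi, hl⟩).1 l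
    simp only [fwdFun]
    split_ifs with h1 h2 h2
    · exact fun a ha => ha.elim (fun h => Or.inl (hm hkl h)) Or.inr
    · exact absurd (h1.trans hkl) h2
    · exact fun a ha => Or.inl (hm hkl ha)
    · exact hm hkl
  · show p ∈ ((fwdFun p ⟨⟨c, i⟩, hm, hpi, hl⟩).1 i').1
    simp only [fwdFun, dif_pos hii']
    exact Or.inr rfl
  · show IsLowerSet (((fwdFun p ⟨⟨c, i⟩, hm, hpi, hl⟩).1 i').1 \ {p})
    simp only [fwdFun, dif_pos hii']
    have : ((c i').1 ∪ {p}) \ {p} = (c i').1 := by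
      ext a
      simp only [Set.mem_diff, Set.mem_union, Set.mem_singleton_iff]
      constructor
      · rintro ⟨ha | ha, hap⟩
        · exact ha
        · exact absurd ha hap
      · intro ha
        exact ⟨Or.inl ha, fun h => hpi' (h ▸ ha)⟩
    rw [this]
    exact (c i').2

lemma bwd_prop
    (y : {ci : (Fin (m + 1) → OIdeal α) × Fin (m + 1) //
      Monotone ci.1 ∧ p ∈ (ci.1 ci.2).1 ∧ IsLowerSet ((ci.1 ci.2).1 \ {p})}) :
    Monotone (bwdFun p y).1 ∧ p ∉ ((bwdFun p y).1 (bwdFun p y).2).1 ∧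
      IsLowerSet (((bwdFun p y).1 (bwdFun p y).2).1 ∪ {p}) := by
  obtain ⟨⟨c, j⟩, hm, hpj, hl⟩ := y
  set T := Finset.univ.filter (fun k => p ∈ (c k).1) with hT
  have hjT : j ∈ T := Finset.mem_filter.2 ⟨Finset.mem_univ _, hpj⟩
  set i'' := T.min' ⟨j, hjT⟩ with hi''
  have hij : i'' ≤ j := Finset.min'_le T j hjT
  have hpi'' : p ∈ (c i'').1 := (Finset.mem_filter.1 (T.min'_mem ⟨j, hjT⟩)).2
  refine ⟨?_, ?_, ?_⟩
  · intro k l hkl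
    show (bwdFun p ⟨⟨c, j⟩, hm, hpj, hl⟩).1 k ≤ (bwdFun p ⟨⟨c, j⟩, hm, hpj, hl⟩).1 l
    simp only [bwdFun]
    split_ifs with h1 h2 h2
    · exact fun a ha => ⟨hm hkl ha.1, ha.2⟩
    · exact fun a ha => hm hkl ha.1
    · exact absurd (hkl.trans h2) h1
    · exact hm hkl
  · show p ∉ ((bwdFun p ⟨⟨c, j⟩, hm, hpj, hl⟩).1 i'').1
    simp only [bwdFun, dif_pos hij]
    exact fun h => h.2 rfl
  · show IsLowerSet (((bwdFun p ⟨⟨c, j⟩, hm, hpj, hl⟩).1 i'').1 ∪ {p})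
    simp only [bwdFun, dif_pos hij]
    have : ((c i'').1 \ {p}) ∪ {p} = (c i'').1 := by
      ext a
      simp only [Set.mem_union, Set.mem_diff, Set.mem_singleton_iff]
      constructor
      · rintro (⟨ha, _⟩ | ha)
        · exact ha
        · exact ha ▸ hpi''
      · intro ha
        by_cases hap : a = p
        · exact Or.inr hap
        · exact Or.inl ⟨ha, hap⟩
    rw [this]
    exact (c i'').2

/-- The toggling bijection between multichain positions where `p` toggles in and where it
toggles out. -/
noncomputable def plusEquivMinus (m : ℕ) :
    {ci : (Fin (m + 1) → OIdeal α) × Fin (m + 1) //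
      Monotone ci.1 ∧ p ∉ (ci.1 ci.2).1 ∧ IsLowerSet ((ci.1 ci.2).1 ∪ {p})} ≃
    {ci : (Fin (m + 1) → OIdeal α) × Fin (m + 1) //
      Monotone ci.1 ∧ p ∈ (ci.1 ci.2).1 ∧ IsLowerSet ((ci.1 ci.2).1 \ {p})} where
  toFun x := ⟨fwdFun p x, fwd_prop p x⟩
  invFun y := ⟨bwdFun p y, bwd_prop p y⟩
  left_inv x := by
    obtain ⟨⟨c, i⟩, hm, hpi, hl⟩ := x
    apply Subtype.ext
    set S := Finset.univ.filter (fun k => p ∉ (c k).1) with hS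
    have hiS : i ∈ S := Finset.mem_filter.2 ⟨Finset.mem_univ _, hpi⟩
    set i' := S.max' ⟨i, hiS⟩ with hi'def
    have hii' : i ≤ i' := Finset.le_max' S i hiS
    have hpi' : p ∉ (c i').1 := (Finset.mem_filter.1 (S.max'_mem ⟨i, hiS⟩)).2
    have hple : ∀ k, k ≤ i' → p ∉ (c k).1 := fun k hk hpk => hpi' (hm hk hpk)
    have hpgt : ∀ k, ¬k ≤ i' → p ∈ (c k).1 := by
      intro k hk
      by_contra hpk
      have hkS : k ∈ S := Finset.mem_filter.2 ⟨Finset.mem_univ _, hpk⟩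
      exact hk (Finset.le_max' S k hkS)
    have hfsnd : (fwdFun p ⟨⟨c, i⟩, hm, hpi, hl⟩).2 = i' := rfl
    have hfst : ∀ k, ((fwdFun p ⟨⟨c, i⟩, hm, hpi, hl⟩).1 k).1
        = if i ≤ k then (c k).1 ∪ {p} else (c k).1 := by
      intro k
      simp only [fwdFun]
      split_ifs <;> rfl
    have hbfst : ∀ k,
        ((bwdFun p ⟨fwdFun p ⟨⟨c, i⟩, hm, hpi, hl⟩, fwd_prop p ⟨⟨c, i⟩, hm, hpi, hl⟩⟩).1 k).1
        = if k ≤ i' then ((fwdFun p ⟨⟨c, i⟩, hm, hpi, hl⟩).1 k).1 \ {p}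
          else ((fwdFun p ⟨⟨c, i⟩, hm, hpi, hl⟩).1 k).1 := by
      intro k
      simp only [bwdFun]
      simp only [hfsnd]
      split_ifs <;> rfl
    have hmem : ∀ k, p ∈ ((fwdFun p ⟨⟨c, i⟩, hm, hpi, hl⟩).1 k).1 ↔ i ≤ k := by
      intro k
      rw [hfst k]
      split_ifs with h
      · exact iff_of_true (Or.inr rfl) h
      · exact iff_of_false (hple k ((le_of_lt (lt_of_not_ge h)).trans hii')) h
    refine Prod.ext (funext fun k => ?_) ?_
    · apply Subtype.ext
      rw [hbfst k, hfst k]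
      by_cases h1 : k ≤ i' <;> by_cases h2 : i ≤ k
      · rw [if_pos h1, if_pos h2]
        have hpk := hple k h1
        ext a
        simp only [Set.mem_diff, Set.mem_union, Set.mem_singleton_iff]
        constructor
        · rintro ⟨ha | ha, hap⟩
          · exact ha
          · exact absurd ha hap
        · exact fun ha => ⟨Or.inl ha, fun h => hpk (h ▸ ha)⟩
      · rw [if_pos h1, if_neg h2]
        exact Set.diff_singleton_eq_self (hple k h1)
      · rw [if_neg h1, if_pos h2]
        have hpk := hpgt k h1
        ext a
        simp only [Set.mem_union, Set.mem_singleton_iff]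
        constructor
        · rintro (ha | ha)
          · exact ha
          · exact ha ▸ hpk
        · exact Or.inl
      · exact absurd ((le_of_lt (lt_of_not_ge h2)).trans hii') h1
    · show (Finset.univ.filter
          (fun k => p ∈ ((fwdFun p ⟨⟨c, i⟩, hm, hpi, hl⟩).1 k).1)).min'
          ⟨i, Finset.mem_filter.2 ⟨Finset.mem_univ _, (hmem i).2 le_rfl⟩⟩ = i
      set F := Finset.univ.filter
        (fun k => p ∈ ((fwdFun p ⟨⟨c, i⟩, hm, hpi, hl⟩).1 k).1) with hF
      have hiF : i ∈ F := Finset.mem_filter.2 ⟨Finset.mem_univ _, (hmem i).2 le_rfl⟩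
      apply le_antisymm
      · exact Finset.min'_le F i hiF
      · exact Finset.le_min' F ⟨i, hiF⟩ i
          (fun k hk => (hmem k).1 (Finset.mem_filter.1 hk).2)
  right_inv y := by
    obtain ⟨⟨c, j⟩, hm, hpj, hl⟩ := y
    apply Subtype.ext
    set T := Finset.univ.filter (fun k => p ∈ (c k).1) with hT
    have hjT : j ∈ T := Finset.mem_filter.2 ⟨Finset.mem_univ _, hpj⟩
    set i'' := T.min' ⟨j, hjT⟩ with hi''def
    have hij : i'' ≤ j := Finset.min'_le T j hjT
    have hpi'' : p ∈ (c i'').1 := (Finset.mem_filter.1 (T.min'_mem ⟨j, hjT⟩)).2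
    have hpge : ∀ k, i'' ≤ k → p ∈ (c k).1 := fun k hk => hm hk hpi''
    have hplt : ∀ k, ¬i'' ≤ k → p ∉ (c k).1 := by
      intro k hk hpk
      have hkT : k ∈ T := Finset.mem_filter.2 ⟨Finset.mem_univ _, hpk⟩
      exact hk (Finset.min'_le T k hkT)
    have hbsnd : (bwdFun p ⟨⟨c, j⟩, hm, hpj, hl⟩).2 = i'' := rfl
    have hbfst : ∀ k, ((bwdFun p ⟨⟨c, j⟩, hm, hpj, hl⟩).1 k).1
        = if k ≤ j then (c k).1 \ {p} else (c k).1 := by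
      intro k
      simp only [bwdFun]
      split_ifs <;> rfl
    have hffst : ∀ k,
        ((fwdFun p ⟨bwdFun p ⟨⟨c, j⟩, hm, hpj, hl⟩, bwd_prop p ⟨⟨c, j⟩, hm, hpj, hl⟩⟩).1 k).1
        = if i'' ≤ k then ((bwdFun p ⟨⟨c, j⟩, hm, hpj, hl⟩).1 k).1 ∪ {p}
          else ((bwdFun p ⟨⟨c, j⟩, hm, hpj, hl⟩).1 k).1 := by
      intro k
      simp only [fwdFun]
      simp only [hbsnd]
      split_ifs <;> rfl
    have hmem : ∀ k, p ∉ ((bwdFun p ⟨⟨c, j⟩, hm, hpj, hl⟩).1 k).1 ↔ k ≤ j := by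
      intro k
      rw [hbfst k]
      split_ifs with h
      · exact iff_of_true (fun hc => hc.2 rfl) h
      · exact iff_of_false
          (not_not_intro (hm (le_of_lt (lt_of_not_ge h)) hpj)) h
    refine Prod.ext (funext fun k => ?_) ?_
    · apply Subtype.ext
      rw [hffst k, hbfst k]
      by_cases h1 : i'' ≤ k <;> by_cases h2 : k ≤ j
      · rw [if_pos h1, if_pos h2]
        have hpk := hpge k h1
        ext a
        simp only [Set.mem_union, Set.mem_diff, Set.mem_singleton_iff]
        constructor
        · rintro (⟨ha, _⟩ | ha)
          · exact ha
          · exact ha ▸ hpk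
        · intro ha
          by_cases hap : a = p
          · exact Or.inr hap
          · exact Or.inl ⟨ha, hap⟩
      · rw [if_pos h1, if_neg h2]
        have hpk : p ∈ (c k).1 := hm (le_of_lt (lt_of_not_ge h2)) hpj
        ext a
        simp only [Set.mem_union, Set.mem_singleton_iff]
        constructor
        · rintro (ha | ha)
          · exact ha
          · exact ha ▸ hpk
        · exact Or.inl
      · rw [if_neg h1, if_pos h2]
        exact Set.diff_singleton_eq_self (hplt k h1)
      · exact absurd ((le_of_lt (lt_of_not_ge h1)).trans hij) h2
    · show (Finset.univ.filter
          (fun k => p ∉ ((bwdFun p ⟨⟨c, j⟩, hm, hpj, hl⟩).1 k).1)).max'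
          ⟨j, Finset.mem_filter.2 ⟨Finset.mem_univ _, (hmem j).2 le_rfl⟩⟩ = j
      set F := Finset.univ.filter
        (fun k => p ∉ ((bwdFun p ⟨⟨c, j⟩, hm, hpj, hl⟩).1 k).1) with hF
      have hjF : j ∈ F := Finset.mem_filter.2 ⟨Finset.mem_univ _, (hmem j).2 le_rfl⟩
      apply le_antisymm
      · exact Finset.max'_le F ⟨j, hjF⟩ j
          (fun k hk => (hmem k).1 (Finset.mem_filter.1 hk).2)
      · exact Finset.le_max' F j hjF

end ToggleBijAux

/-- Lemma `lem:mmchaintogsym`.  For any finite poset `P` and any `m ≥ 0`,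
the modified `m`-multichain distribution `m̂chain(m)` on `J(P)` is toggle-symmetric. -/
theorem statement3 (α : Type*) [Finite α] [PartialOrder α] (m : ℕ) :
    ToggleSymmetric (mhatDist (OIdeal α) m) := by
  intro p
  haveI : Fintype α := Fintype.ofFinite α
  haveI : Fintype (OIdeal α) := Fintype.ofFinite _
  have count : ∀ Q : OIdeal α → Prop,
      Nat.card {ci : (Fin (m + 1) → OIdeal α) × Fin (m + 1) //
          Monotone ci.1 ∧ Q (ci.1 ci.2)}
        = ∑ I : OIdeal α, if Q I then
            Nat.card {ci : (Fin (m + 1) → OIdeal α) × Fin (m + 1) //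
              Monotone ci.1 ∧ ci.1 ci.2 = I} else 0 := by
    intro Q
    have h1 : Nat.card {ci : (Fin (m + 1) → OIdeal α) × Fin (m + 1) //
          Monotone ci.1 ∧ Q (ci.1 ci.2)}
        = (Finset.univ.filter fun ci : (Fin (m + 1) → OIdeal α) × Fin (m + 1) =>
            Monotone ci.1 ∧ Q (ci.1 ci.2)).card := by
      rw [Nat.card_eq_fintype_card, Fintype.card_subtype]
    have h2 : ∀ I : OIdeal α,
        Nat.card {ci : (Fin (m + 1) → OIdeal α) × Fin (m + 1) //
          Monotone ci.1 ∧ ci.1 ci.2 = I}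
        = (Finset.univ.filter fun ci : (Fin (m + 1) → OIdeal α) × Fin (m + 1) =>
            Monotone ci.1 ∧ ci.1 ci.2 = I).card := by
      intro I
      rw [Nat.card_eq_fintype_card, Fintype.card_subtype]
    rw [h1, Finset.card_eq_sum_card_fiberwise
      (f := fun ci : (Fin (m + 1) → OIdeal α) × Fin (m + 1) => ci.1 ci.2)
      (t := Finset.univ) (fun _ _ => Finset.mem_univ _)]
    refine Finset.sum_congr rfl fun I _ => ?_
    rw [Finset.filter_filter]
    by_cases hQ : Q I
    · rw [if_pos hQ, h2 I]
      congr 1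
      ext ci
      simp only [Finset.mem_filter, Finset.mem_univ, true_and]
      constructor
      · rintro ⟨⟨hmo, _⟩, he⟩
        exact ⟨hmo, he⟩
      · rintro ⟨hmo, he⟩
        subst he
        exact ⟨⟨hmo, hQ⟩, rfl⟩
    · rw [if_neg hQ, Finset.card_eq_zero]
      ext ci
      simp only [Finset.mem_filter, Finset.mem_univ, true_and,
        Finset.notMem_empty, iff_false, not_and]
      rintro ⟨_, hq⟩ he
      exact hQ (he ▸ hq)
  have e1 : expect (mhatDist (OIdeal α) m) (Tplus p)
      = (Nat.card {ci : (Fin (m + 1) → OIdeal α) × Fin (m + 1) //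
          Monotone ci.1 ∧ p ∉ (ci.1 ci.2).1 ∧ IsLowerSet ((ci.1 ci.2).1 ∪ {p})} : ℝ) /
        (((m : ℝ) + 1) * (Nat.card {c : Fin (m + 1) → OIdeal α // Monotone c} : ℝ)) := by
    rw [expect, finsum_eq_sum_of_fintype,
      count (fun I => p ∉ I.1 ∧ IsLowerSet (I.1 ∪ {p})), Nat.cast_sum, Finset.sum_div]
    refine Finset.sum_congr rfl fun I _ => ?_
    by_cases hQ : p ∉ I.1 ∧ IsLowerSet (I.1 ∪ {p})
    · simp only [mhatDist, Tplus, if_pos hQ, mul_one]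
    · simp only [mhatDist, Tplus, if_neg hQ, mul_zero, Nat.cast_zero, zero_div]
  have e2 : expect (mhatDist (OIdeal α) m) (Tminus p)
      = (Nat.card {ci : (Fin (m + 1) → OIdeal α) × Fin (m + 1) //
          Monotone ci.1 ∧ p ∈ (ci.1 ci.2).1 ∧ IsLowerSet ((ci.1 ci.2).1 \ {p})} : ℝ) /
        (((m : ℝ) + 1) * (Nat.card {c : Fin (m + 1) → OIdeal α // Monotone c} : ℝ)) := by
    rw [expect, finsum_eq_sum_of_fintype,
      count (fun I => p ∈ I.1 ∧ IsLowerSet (I.1 \ {p})), Nat.cast_sum, Finset.sum_div]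
    refine Finset.sum_congr rfl fun I _ => ?_
    by_cases hQ : p ∈ I.1 ∧ IsLowerSet (I.1 \ {p})
    · simp only [mhatDist, Tminus, if_pos hQ, mul_one]
    · simp only [mhatDist, Tminus, if_neg hQ, mul_zero, Nat.cast_zero, zero_div]
  rw [e1, e2, Nat.card_congr (plusEquivMinus p m)]

end CDEPaper
end
end

section
/- Let P be a finite poset. For any k = 0, 1, ..., #P, the k-chain distribution chain(k) on the distributive lattice J(P) of order ideals of P is toggle-symmetric. -/
open scoped Classical

noncomputable section

/-! A strict chain `I₀ ⊊ ⋯ ⊊ I_k` in `J(P)` is the same as a level function `f : P → {0, …, k+1}`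
(`I_i = {x | f x ≤ i}`) that is monotone and takes every value `1, …, k`. The ideal `I_i` admits
toggling `p` in iff `max_{q < p} f q ≤ i < f p`, and toggling `p` out iff
`f p ≤ i < min_{q > p} f q`. Pairs (chain, in-position) and (chain, out-position) are matched by
moving `p` to a new level: if other elements share the level of `p`, set `f p := i` and record
the old level minus one; if `p` is alone on its level, delete that level and reinsert it just
above `i`, recording the old level. -/

namespace CDEPaper

section LowerSet

variable {α : Type*} [PartialOrder α] {s : Set α}

theorem isLowerSet_union_singleton_iff (hs : IsLowerSet s) (p : α) :
    IsLowerSet (s ∪ {p}) ↔ ∀ q < p, q ∈ s := by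
  refine ⟨fun h q hq => ?_, fun h a b hba ha => ?_⟩
  · exact (h hq.le (Or.inr rfl)).resolve_right hq.ne
  · rcases ha with ha | rfl
    · exact Or.inl (hs hba ha)
    · exact hba.lt_or_eq.imp (h b) id

theorem isLowerSet_diff_singleton_iff (hs : IsLowerSet s) (p : α) :
    IsLowerSet (s \ {p}) ↔ ∀ q, p < q → q ∉ s := by
  refine ⟨fun h q hpq hq => (h hpq.le ⟨hq, hpq.ne'⟩).2 rfl, fun h a b hba ha => ⟨hs hba ha.1, ?_⟩⟩
  rintro rfl
  exact h a (hba.lt_of_ne fun hab => ha.2 hab.symm) ha.1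

end LowerSet

section ChainDistribution

variable {β : Type*} [PartialOrder β] {k : ℕ}

theorem card_chains_through_eq_card_chainPositions (I : β) :
    Nat.card {c : Fin (k + 1) → β // StrictMono c ∧ ∃ i, c i = I} =
      Nat.card {ci : (Fin (k + 1) → β) × Fin (k + 1) // StrictMono ci.1 ∧ ci.1 ci.2 = I} := by
  refine (Nat.card_eq_of_bijective (fun ci => ⟨ci.1.1, ci.2.1, ci.1.2, ci.2.2⟩) ⟨?_, ?_⟩).symm
  · rintro ⟨⟨c, i⟩, hc, hi⟩ ⟨⟨c', i'⟩, hc', hi'⟩ h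
    simp only [Subtype.mk.injEq] at h
    subst h
    have : i = i' := hc.injective (hi.trans hi'.symm)
    subst this
    rfl
  · rintro ⟨c, hc, i, hi⟩
    exact ⟨⟨(c, i), hc, hi⟩, rfl⟩

theorem card_chainPositions_eq_sum [Fintype β] (Q : β → Prop) [DecidablePred Q] :
    Nat.card {ci : (Fin (k + 1) → β) × Fin (k + 1) // StrictMono ci.1 ∧ Q (ci.1 ci.2)} =
      ∑ I, if Q I then
        Nat.card {ci : (Fin (k + 1) → β) × Fin (k + 1) // StrictMono ci.1 ∧ ci.1 ci.2 = I}
      else 0 := by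
  simp only [Nat.card_eq_fintype_card, Fintype.card_subtype]
  rw [Finset.card_eq_sum_card_fiberwise (f := fun ci => ci.1 ci.2) (t := Finset.univ)
    (fun _ _ => Finset.mem_univ _)]
  refine Finset.sum_congr rfl fun I _ => ?_
  rw [Finset.filter_filter]
  split_ifs with hQ
  · congr 1
    ext ci
    simp only [Finset.mem_filter, Finset.mem_univ, true_and]
    exact ⟨fun h => ⟨h.1.1, h.2⟩, fun h => ⟨⟨h.1, h.2 ▸ hQ⟩, h.2⟩⟩
  · rw [Finset.card_eq_zero, Finset.filter_eq_empty_iff]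
    rintro ci - ⟨⟨-, hci⟩, rfl⟩
    exact hQ hci

theorem expect_chainDist_indicator [Finite β] (Q : β → Prop) [DecidablePred Q] :
    expect (chainDist β k) (fun I => if Q I then 1 else 0) =
      Nat.card {ci : (Fin (k + 1) → β) × Fin (k + 1) // StrictMono ci.1 ∧ Q (ci.1 ci.2)} /
        (((k : ℝ) + 1) * Nat.card {c : Fin (k + 1) → β // StrictMono c}) := by
  have := Fintype.ofFinite β
  rw [expect, finsum_eq_sum_of_fintype, card_chainPositions_eq_sum, Nat.cast_sum,
    Finset.sum_div]
  refine Finset.sum_congr rfl fun I _ => ?_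
  rw [chainDist, card_chains_through_eq_card_chainPositions]
  split_ifs <;> simp

end ChainDistribution

section LevelFunction

variable {α : Type*} [PartialOrder α] {k : ℕ}

structure IsLevelFn (k : ℕ) (f : α → ℕ) : Prop where
  monotone : Monotone f
  le_succ : ∀ x, f x ≤ k + 1
  exists_eq : ∀ i, 1 ≤ i → i ≤ k → ∃ x, f x = i

def level (c : Fin (k + 1) → OIdeal α) (x : α) : ℕ :=
  (Finset.univ.filter fun i => x ∉ (c i).1).card

def ofLevel (f : α → ℕ) (hf : Monotone f) (i : Fin (k + 1)) : OIdeal α :=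
  ⟨{x | f x ≤ i}, fun _ _ hba ha => (hf hba).trans ha⟩

theorem mem_iff_level_le {c : Fin (k + 1) → OIdeal α} (hc : Monotone c) (x : α)
    (i : Fin (k + 1)) : x ∈ (c i).1 ↔ level c x ≤ i := by
  constructor
  · intro hx
    calc level c x ≤ (Finset.Iio i).card := Finset.card_le_card fun j hj => by
            simp only [Finset.mem_filter, Finset.mem_univ, true_and] at hj
            exact Finset.mem_Iio.2 (lt_of_not_ge fun hij => hj (hc hij hx))
      _ = i := Fin.card_Iio i
  · intro h
    by_contra hx
    have : (Finset.Iic i).card ≤ level c x := Finset.card_le_card fun j hj => by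
      simp only [Finset.mem_filter, Finset.mem_univ, true_and]
      exact fun hxj => hx (hc (Finset.mem_Iic.1 hj) hxj)
    rw [Fin.card_Iic] at this
    omega

theorem isLevelFn_level {c : Fin (k + 1) → OIdeal α} (hc : StrictMono c) :
    IsLevelFn k (level c) where
  monotone x y hxy := Finset.card_le_card fun i => by
    simp only [Finset.mem_filter, Finset.mem_univ, true_and]
    exact fun hy hx => hy ((c i).2 hxy hx)
  le_succ x := (Finset.card_filter_le _ _).trans (by simp)
  exists_eq i hi hik := by
    have hlt : c ⟨i - 1, by omega⟩ < c ⟨i, by omega⟩ := hc (Fin.mk_lt_mk.2 (by omega))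
    obtain ⟨x, hx, hx'⟩ := Set.exists_of_ssubset hlt
    refine ⟨x, ?_⟩
    have h₁ := (mem_iff_level_le hc.monotone x _).1 hx
    have h₂ := (mem_iff_level_le hc.monotone x _).not.1 hx'
    simp only at h₁ h₂
    omega

theorem strictMono_ofLevel {f : α → ℕ} (hf : IsLevelFn k f) :
    StrictMono (ofLevel (k := k) f hf.monotone) := by
  intro i j hij
  have hij' : (i : ℕ) < j := hij
  obtain ⟨x, hx⟩ := hf.exists_eq j (by omega) (by omega)
  refine lt_of_le_not_ge (fun y (hy : f y ≤ i) => show f y ≤ j by omega) fun hle => ?_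
  have : f x ≤ i := hle (show f x ≤ j by omega)
  omega

theorem ofLevel_level {c : Fin (k + 1) → OIdeal α} (hc : StrictMono c) :
    ofLevel (level c) (isLevelFn_level hc).monotone = c :=
  funext fun i => Subtype.ext <| Set.ext fun x => (mem_iff_level_le hc.monotone x i).symm

theorem level_ofLevel {f : α → ℕ} (hf : IsLevelFn k f) :
    level (ofLevel (k := k) f hf.monotone) = f := by
  funext x
  have key (i : ℕ) (hi : i ≤ k) : level (ofLevel f hf.monotone) x ≤ i ↔ f x ≤ i :=
    (mem_iff_level_le (strictMono_ofLevel hf).monotone x ⟨i, by omega⟩).symm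
  have hl := (isLevelFn_level (strictMono_ofLevel hf)).le_succ x
  have hf' := hf.le_succ x
  by_contra hne
  rcases Nat.lt_or_gt_of_ne hne with h | h
  · have := (key _ (by omega)).1 le_rfl
    omega
  · have := (key (f x) (by omega)).2 le_rfl
    omega

theorem card_chainPositions_eq_card_levelPairs (R : OIdeal α → Prop) (S : (α → ℕ) → ℕ → Prop)
    (hRS : ∀ c : Fin (k + 1) → OIdeal α, StrictMono c → ∀ i, R (c i) ↔ S (level c) i) :
    Nat.card {ci : (Fin (k + 1) → OIdeal α) × Fin (k + 1) // StrictMono ci.1 ∧ R (ci.1 ci.2)} =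
      Nat.card {fi : (α → ℕ) × ℕ // IsLevelFn k fi.1 ∧ fi.2 ≤ k ∧ S fi.1 fi.2} :=
  Nat.card_congr
    { toFun := fun ci => ⟨(level ci.1.1, ci.1.2), isLevelFn_level ci.2.1, by omega,
        (hRS _ ci.2.1 _).1 ci.2.2⟩
      invFun := fun fi => ⟨(ofLevel fi.1.1 fi.2.1.monotone, ⟨fi.1.2, by omega⟩),
        strictMono_ofLevel fi.2.1, (hRS _ (strictMono_ofLevel fi.2.1) _).2 <| by
          rw [level_ofLevel fi.2.1]; exact fi.2.2.2⟩
      left_inv := fun ci => by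
        ext1; ext1
        · exact ofLevel_level ci.2.1
        · rfl
      right_inv := fun fi => by
        ext1; ext1
        · exact level_ofLevel fi.2.1
        · rfl }

end LevelFunction

section Marks

variable {α : Type*} [PartialOrder α] {k : ℕ}

def InMark (p : α) (f : α → ℕ) (i : ℕ) : Prop :=
  i < f p ∧ ∀ q < p, f q ≤ i

def OutMark (p : α) (f : α → ℕ) (i : ℕ) : Prop :=
  f p ≤ i ∧ ∀ q, p < q → i < f q

theorem canToggleIn_iff_inMark {c : Fin (k + 1) → OIdeal α} (hc : StrictMono c) (p : α)
    (i : Fin (k + 1)) :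
    (p ∉ (c i).1 ∧ IsLowerSet ((c i).1 ∪ {p})) ↔ InMark p (level c) i := by
  simp only [isLowerSet_union_singleton_iff (c i).2, mem_iff_level_le hc.monotone, InMark, not_le]

theorem canToggleOut_iff_outMark {c : Fin (k + 1) → OIdeal α} (hc : StrictMono c) (p : α)
    (i : Fin (k + 1)) :
    (p ∈ (c i).1 ∧ IsLowerSet ((c i).1 \ {p})) ↔ OutMark p (level c) i := by
  simp only [isLowerSet_diff_singleton_iff (c i).2, mem_iff_level_le hc.monotone, OutMark, not_le]

end Marks

section Relocate

variable {α : Type*} {k : ℕ} {p : α} {f : α → ℕ}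

def SoleAtLevel (k : ℕ) (p : α) (f : α → ℕ) : Prop :=
  1 ≤ f p ∧ f p ≤ k ∧ ∀ x, x ≠ p → f x ≠ f p

def closeGap (m v : ℕ) : ℕ := if m < v then v - 1 else v

def openGap (m v : ℕ) : ℕ := if m ≤ v then v + 1 else v

def relocate (p : α) (f : α → ℕ) (m : ℕ) (x : α) : ℕ :=
  if x = p then m else openGap m (closeGap (f p) (f x))

@[simp]
theorem relocate_self (p : α) (f : α → ℕ) (m : ℕ) : relocate p f m p = m := if_pos rfl

theorem relocate_of_ne {x : α} (hx : x ≠ p) (m : ℕ) :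
    relocate p f m x = openGap m (closeGap (f p) (f x)) :=
  if_neg hx

theorem soleAtLevel_relocate {m : ℕ} (hm : 1 ≤ m) (hmk : m ≤ k) :
    SoleAtLevel k p (relocate p f m) := by
  refine ⟨by simpa, by simpa, fun x hx => ?_⟩
  simp only [relocate_of_ne hx, relocate_self, openGap, closeGap]
  split_ifs <;> omega

theorem relocate_relocate (hf : ∀ x, x ≠ p → f x ≠ f p) (m : ℕ) :
    relocate p (relocate p f m) (f p) = f := by
  funext x
  by_cases hx : x = p
  · subst hx; simp
  · have := hf x hx
    simp only [relocate_of_ne hx, relocate_self, openGap, closeGap]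
    split_ifs <;> omega

variable [PartialOrder α]

theorem SoleAtLevel.apply_lt (hs : SoleAtLevel k p f) (hf : Monotone f) {q : α} (hq : q < p) :
    f q < f p :=
  (hf hq.le).lt_of_ne (hs.2.2 q hq.ne)

theorem SoleAtLevel.lt_apply (hs : SoleAtLevel k p f) (hf : Monotone f) {q : α} (hq : p < q) :
    f p < f q :=
  (hf hq.le).lt_of_ne (hs.2.2 q hq.ne').symm

theorem isLevelFn_relocate (hf : IsLevelFn k f) (hs : SoleAtLevel k p f) {m : ℕ} (hm : 1 ≤ m)
    (hmk : m ≤ k) (hlt : ∀ q < p, f q < m) (hgt : ∀ q, p < q → m < f q) :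
    IsLevelFn k (relocate p f m) where
  monotone x y hxy := by
    have := hf.monotone hxy
    by_cases hx : x = p <;> by_cases hy : y = p
    · simp [hx, hy]
    · subst hx
      have := hgt y (lt_of_le_of_ne hxy (Ne.symm hy))
      simp only [relocate_of_ne hy, relocate_self, openGap, closeGap]
      split_ifs <;> omega
    · subst hy
      have := hlt x (lt_of_le_of_ne hxy hx)
      simp only [relocate_of_ne hx, relocate_self, openGap, closeGap]
      split_ifs <;> omega
    · simp only [relocate_of_ne hx, relocate_of_ne hy, openGap, closeGap]
      split_ifs <;> omega
  le_succ x := by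
    have := hf.le_succ x
    obtain ⟨-, hpk, -⟩ := hs
    by_cases hx : x = p
    · rw [hx, relocate_self]; omega
    · simp only [relocate_of_ne hx, openGap, closeGap]
      split_ifs <;> omega
  exists_eq i hi hik := by
    obtain ⟨hp1, hpk, -⟩ := hs
    rcases lt_trichotomy i m with h | rfl | h
    · obtain ⟨x, hx⟩ := hf.exists_eq (if i < f p then i else i + 1) (by split_ifs <;> omega)
        (by split_ifs <;> omega)
      have hxp : x ≠ p := by rintro rfl; split_ifs at hx <;> omega
      exact ⟨x, by simp only [relocate_of_ne hxp, openGap, closeGap]; split_ifs at hx ⊢ <;> omega⟩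
    · exact ⟨p, relocate_self p f i⟩
    · obtain ⟨x, hx⟩ := hf.exists_eq (if i ≤ f p then i - 1 else i) (by split_ifs <;> omega)
        (by split_ifs <;> omega)
      have hxp : x ≠ p := by rintro rfl; split_ifs at hx <;> omega
      exact ⟨x, by simp only [relocate_of_ne hxp, openGap, closeGap]; split_ifs at hx ⊢ <;> omega⟩

end Relocate

section Update

variable {α : Type*} [PartialOrder α] {k : ℕ} {p : α} {f : α → ℕ}

theorem isLevelFn_update (hf : IsLevelFn k f) (hs : ¬SoleAtLevel k p f) {v : ℕ} (hvk : v ≤ k + 1)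
    (hlt : ∀ q < p, f q ≤ v) (hgt : ∀ q, p < q → v ≤ f q) :
    IsLevelFn k (Function.update f p v) where
  monotone x y hxy := by
    by_cases hx : x = p <;> by_cases hy : y = p
    · simp [hx, hy]
    · subst hx
      simpa [hy] using hgt y (lt_of_le_of_ne hxy (Ne.symm hy))
    · subst hy
      simpa [hx] using hlt x (lt_of_le_of_ne hxy hx)
    · simpa [hx, hy] using hf.monotone hxy
  le_succ x := by
    by_cases hx : x = p
    · simpa [hx] using hvk
    · simpa [hx] using hf.le_succ x
  exists_eq i hi hik := by
    by_cases hip : i = f p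
    · obtain ⟨x, hxp, hx⟩ : ∃ x, x ≠ p ∧ f x = f p := by
        simpa [SoleAtLevel, hip ▸ hi, hip ▸ hik] using hs
      exact ⟨x, by simp [hxp, hx, hip]⟩
    · obtain ⟨x, hx⟩ := hf.exists_eq i hi hik
      have hxp : x ≠ p := by rintro rfl; exact hip hx.symm
      exact ⟨x, by simp [hxp, hx]⟩

theorem not_soleAtLevel_update (hf : IsLevelFn k f) {v : ℕ} (hv : v ≠ f p) :
    ¬SoleAtLevel k p (Function.update f p v) := by
  rintro ⟨hv1, hvk, hsole⟩
  simp only [Function.update_self] at hv1 hvk hsole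
  obtain ⟨x, hx⟩ := hf.exists_eq v hv1 hvk
  have hxp : x ≠ p := by rintro rfl; exact hv hx.symm
  exact hsole x hxp (by simp [hxp, hx])

end Update

section MarkBijection

variable {α : Type*} [PartialOrder α] {k : ℕ} {p : α} {f : α → ℕ} {i j : ℕ}

def toOutMark (k : ℕ) (p : α) (x : (α → ℕ) × ℕ) : (α → ℕ) × ℕ :=
  if SoleAtLevel k p x.1 then (relocate p x.1 (x.2 + 1), x.1 p)
  else (Function.update x.1 p x.2, x.1 p - 1)

def toInMark (k : ℕ) (p : α) (y : (α → ℕ) × ℕ) : (α → ℕ) × ℕ :=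
  if SoleAtLevel k p y.1 then (relocate p y.1 y.2, y.1 p - 1)
  else (Function.update y.1 p (y.2 + 1), y.1 p)

theorem toOutMark_spec (hf : IsLevelFn k f) (hi : InMark p f i) :
    let y := toOutMark k p (f, i)
    (IsLevelFn k y.1 ∧ y.2 ≤ k ∧ OutMark p y.1 y.2) ∧ toInMark k p y = (f, i) := by
  obtain ⟨hip, hlow⟩ := hi
  have hpk := hf.le_succ p
  by_cases hs : SoleAtLevel k p f
  · have hgt (q : α) (hq : p < q) := hs.lt_apply hf.monotone hq
    have hpk' := hs.2.1
    simp only [toOutMark, if_pos hs]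
    have hrel := isLevelFn_relocate hf hs (m := i + 1) (by omega) (by omega)
      (fun q hq => by have := hlow q hq; omega) (fun q hq => by have := hgt q hq; omega)
    refine ⟨⟨hrel, hpk', ⟨by rw [relocate_self]; omega, fun q hq => ?_⟩⟩, ?_⟩
    · have := hgt q hq
      simp only [relocate_of_ne hq.ne', openGap, closeGap]
      split_ifs <;> omega
    · rw [toInMark, if_pos (soleAtLevel_relocate (by omega) (by omega)), relocate_relocate hs.2.2]
      simp
  · have hgt (q : α) (hq : p < q) := hf.monotone hq.le
    simp only [toOutMark, if_neg hs]
    refine ⟨⟨isLevelFn_update hf hs (by omega) hlow (fun q hq => by have := hgt q hq; omega),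
        by omega, ⟨by rw [Function.update_self]; omega, fun q hq => ?_⟩⟩, ?_⟩
    · have := hgt q hq
      simp only [Function.update_of_ne hq.ne']
      omega
    · rw [toInMark, if_neg (not_soleAtLevel_update hf hip.ne)]
      simp only [Function.update_idem, Function.update_self, Prod.mk.injEq, and_true]
      rw [Nat.sub_add_cancel (by omega), Function.update_eq_self]

theorem toInMark_spec (hf : IsLevelFn k f) (hjk : j ≤ k) (hj : OutMark p f j) :
    let x := toInMark k p (f, j)
    (IsLevelFn k x.1 ∧ x.2 ≤ k ∧ InMark p x.1 x.2) ∧ toOutMark k p x = (f, j) := by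
  obtain ⟨hpj, hhigh⟩ := hj
  by_cases hs : SoleAtLevel k p f
  · have hlt (q : α) (hq : q < p) := hs.apply_lt hf.monotone hq
    have hp1 := hs.1
    simp only [toInMark, if_pos hs]
    refine ⟨⟨isLevelFn_relocate hf hs (by omega) hjk (fun q hq => by have := hlt q hq; omega)
        hhigh, by omega, ⟨by rw [relocate_self]; omega, fun q hq => ?_⟩⟩, ?_⟩
    · have := hlt q hq
      simp only [relocate_of_ne hq.ne, openGap, closeGap]
      split_ifs <;> omega
    · rw [toOutMark, if_pos (soleAtLevel_relocate (by omega) hjk), Nat.sub_add_cancel hp1,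
        relocate_relocate hs.2.2]
      simp
  · have hlt (q : α) (hq : q < p) := hf.monotone hq.le
    simp only [toInMark, if_neg hs]
    refine ⟨⟨isLevelFn_update hf hs (by omega) (fun q hq => by have := hlt q hq; omega)
        hhigh, by omega, ⟨by rw [Function.update_self]; omega, fun q hq => ?_⟩⟩, ?_⟩
    · simpa [Function.update_of_ne hq.ne] using hlt q hq
    · rw [toOutMark, if_neg (not_soleAtLevel_update hf (by omega))]
      simp [Function.update_idem, Function.update_eq_self]

theorem card_inMarks_eq_card_outMarks (k : ℕ) (p : α) :
    Nat.card {x : (α → ℕ) × ℕ // IsLevelFn k x.1 ∧ x.2 ≤ k ∧ InMark p x.1 x.2} =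
      Nat.card {y : (α → ℕ) × ℕ // IsLevelFn k y.1 ∧ y.2 ≤ k ∧ OutMark p y.1 y.2} :=
  Nat.card_congr
    { toFun := fun x => ⟨toOutMark k p x.1, (toOutMark_spec x.2.1 x.2.2.2).1⟩
      invFun := fun y => ⟨toInMark k p y.1, (toInMark_spec y.2.1 y.2.2.1 y.2.2.2).1⟩
      left_inv := fun x => Subtype.ext (toOutMark_spec x.2.1 x.2.2.2).2
      right_inv := fun y => Subtype.ext (toInMark_spec y.2.1 y.2.2.1 y.2.2.2).2 }

end MarkBijection

theorem statement4_general (α : Type*) [Finite α] [PartialOrder α] (k : ℕ) :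
    ToggleSymmetric (chainDist (OIdeal α) k) := by
  intro p
  unfold Tplus Tminus
  rw [expect_chainDist_indicator, expect_chainDist_indicator,
    card_chainPositions_eq_card_levelPairs (fun I => p ∉ I.1 ∧ IsLowerSet (I.1 ∪ {p})) (InMark p)
      fun c hc => canToggleIn_iff_inMark hc p,
    card_chainPositions_eq_card_levelPairs (fun I => p ∈ I.1 ∧ IsLowerSet (I.1 \ {p})) (OutMark p)
      fun c hc => canToggleOut_iff_outMark hc p,
    card_inMarks_eq_card_outMarks]

/-- Lemma `lem:chaintogsym`.  For any finite poset `P` and any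
`k = 0, 1, …, #P`, the `k`-chain distribution `chain(k)` on `J(P)` is toggle-symmetric. -/
theorem statement4 (α : Type*) [Finite α] [PartialOrder α] (k : ℕ) (hk : k ≤ Nat.card α) :
    ToggleSymmetric (chainDist (OIdeal α) k) :=
  statement4_general α k

end CDEPaper
end
end

section
/- Let P be a finite graded poset of rank r (i.e. P is ranked with maximum rank value r) for which J(P) is tCDE. Then the edge density of J(P) satisfies E(uni_{J(P)}; ddeg) = #P / (r + 2). -/
open scoped Classical

noncomputable section

/-!
The rank ideals `I_j = {x | rk x < j}`, `0 ≤ j ≤ r + 1`, form a chain from `∅` to `P` along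
which every `p` can be toggled in exactly once (at `j = rk p`) and toggled out exactly once
(at `j = rk p + 1`). For this to be exact, minimal elements must have rank `0` and maximal ones
rank `r`; gradedness gives this, because the ranks along a maximal chain through `p` are `r + 1`
distinct values in `[0, r]`. Hence the uniform distribution on these `r + 2` ideals is
toggle-symmetric, and by tCDE its expected down-degree is the edge density. As `ddeg I` counts
the elements that can be toggled out of `I`, summing it along the chain counts each element of
`P` once, which gives `#P / (r + 2)`.
-/

namespace CDEPaper

section Rank

variable {α : Type*} [PartialOrder α] {rk : α → ℕ}

theorem strictMono_of_covBy_succ [Finite α] (hcov : ∀ p q : α, p ⋖ q → rk q = rk p + 1) :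
    StrictMono rk := by
  have := Fintype.ofFinite α
  let := Fintype.toLocallyFiniteOrder (α := α)
  exact (strictMono_iff_forall_covBy rk).2 fun p q h => by
    rw [hcov p q h]
    exact Nat.lt_succ_self _

theorem exists_mem_rank_eq_of_isChain (hrk : StrictMono rk) {r : ℕ} (hler : ∀ p, rk p ≤ r)
    {C : Set α} (hC : IsChain (· ≤ ·) C) (hcard : Nat.card C = r + 1) {k : ℕ}
    (hk : k ≤ r) :
    ∃ c ∈ C, rk c = k := by
  have hinj : Set.InjOn rk C := by
    intro a ha b hb hab
    rcases hC.total ha hb with h | h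
    · exact h.eq_or_lt.resolve_right fun hlt => (hrk hlt).ne hab
    · exact (h.eq_or_lt.resolve_right fun hlt => (hrk hlt).ne hab.symm).symm
  have himage : rk '' C = ↑(Finset.range (r + 1)) := by
    refine Set.eq_of_subset_of_ncard_le ?_ ?_ (Finset.finite_toSet _)
    · rintro _ ⟨c, -, rfl⟩
      simpa using Nat.lt_succ_of_le (hler c)
    · rw [Set.ncard_coe_finset, Finset.card_range, hinj.ncard_image, ← Nat.card_coe_set_eq,
        hcard]
  rw [← Set.mem_image, himage]
  simpa using Nat.lt_succ_of_le hk

variable {r : ℕ} (hrk : StrictMono rk) (hler : ∀ p, rk p ≤ r)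
  (hgraded : ∀ C : Set α, IsMaxChain (· ≤ ·) C → Nat.card C = r + 1)
include hrk hler hgraded

theorem rank_eq_zero_of_isMin {p : α} (hp : IsMin p) : rk p = 0 := by
  obtain ⟨C, hC, hpC⟩ := (IsChain.singleton (r := (· ≤ ·)) (a := p)).exists_maxChain
  obtain ⟨c, hc, hc0⟩ :=
    exists_mem_rank_eq_of_isChain hrk hler hC.isChain (hgraded C hC) (Nat.zero_le r)
  have hpc : p ≤ c := (hC.isChain.total (hpC rfl) hc).elim id fun h => hp h
  exact Nat.eq_zero_of_le_zero (hc0 ▸ hrk.monotone hpc)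

theorem rank_eq_of_isMax {p : α} (hp : IsMax p) : rk p = r := by
  obtain ⟨C, hC, hpC⟩ := (IsChain.singleton (r := (· ≤ ·)) (a := p)).exists_maxChain
  obtain ⟨c, hc, hcr⟩ := exists_mem_rank_eq_of_isChain hrk hler hC.isChain (hgraded C hC) le_rfl
  have hcp : c ≤ p := (hC.isChain.total hc (hpC rfl)).elim id fun h => hp h
  exact (hler p).antisymm (hcr ▸ hrk.monotone hcp)

end Rank

section RankIdeal

variable {α : Type*} [PartialOrder α]

def rankIdeal (rk : α → ℕ) (hrk : Monotone rk) (j : ℕ) : OIdeal α :=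
  ⟨{x | rk x < j}, fun _ _ hba ha => (hrk hba).trans_lt ha⟩

variable {rk : α → ℕ} (hrk : StrictMono rk) (hcov : ∀ p q : α, p ⋖ q → rk q = rk p + 1)
include hrk hcov

theorem Tplus_rankIdeal [WellFoundedGT α] (hmin : ∀ p, IsMin p → rk p = 0) (p : α) (j : ℕ) :
    Tplus p (rankIdeal rk hrk.monotone j) = if rk p = j then 1 else 0 := by
  refine if_congr ⟨fun ⟨hpI, hlower⟩ => ?_, ?_⟩ rfl rfl
  · have hjp : j ≤ rk p := not_lt.1 hpI
    by_contra hne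
    have hpmin : ¬IsMin p := fun h => by rw [hmin p h] at hne hjp; omega
    obtain ⟨q, hqp⟩ := exists_covBy_of_wellFoundedGT hpmin
    rcases hlower hqp.le (Or.inr rfl) with hq | hq
    · have := hcov q p hqp
      have : rk q < j := hq
      omega
    · exact hqp.ne hq
  · rintro rfl
    refine ⟨(lt_irrefl (rk p) ·), fun a b hba ha => ?_⟩
    rcases ha with ha | rfl
    · exact Or.inl ((hrk.monotone hba).trans_lt ha)
    · rcases hba.eq_or_lt with rfl | hlt
      · exact Or.inr rfl
      · exact Or.inl (hrk hlt)

theorem Tminus_rankIdeal [WellFoundedLT α] {r : ℕ} (hmax : ∀ p, IsMax p → rk p = r) (p : α)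
    {j : ℕ} (hj : j ≤ r + 1) :
    Tminus p (rankIdeal rk hrk.monotone j) = if j = rk p + 1 then 1 else 0 := by
  refine if_congr ⟨fun ⟨hpI, hlower⟩ => ?_, ?_⟩ rfl rfl
  · have hpj : rk p < j := hpI
    by_contra hne
    have hpmax : ¬IsMax p := fun h => by rw [hmax p h] at hne hpj; omega
    obtain ⟨q, hpq⟩ := exists_covBy_of_wellFoundedLT hpmax
    have hqj : rk q < j := by have := hcov p q hpq; omega
    exact (hlower hpq.le ⟨hqj, hpq.ne'⟩).2 rfl
  · rintro rfl
    refine ⟨Nat.lt_succ_self _,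
      fun a b hba ⟨ha, hap⟩ => ⟨(hrk.monotone hba).trans_lt ha, ?_⟩⟩
    rintro rfl
    exact (hrk (lt_of_le_of_ne hba (Ne.symm hap))).not_ge (Nat.lt_succ_iff.1 ha)

end RankIdeal

section DownDegree

variable {α : Type*} [PartialOrder α]

theorem OIdeal.covBy_iff [Finite α] {J I : OIdeal α} :
    J ⋖ I ↔ ∃ p ∈ I.1, I.1 \ {p} = J.1 := by
  refine ⟨fun h => ?_, fun ⟨p, hp, hJ⟩ => ?_⟩
  · have hdiff : (I.1 \ J.1).Nonempty := Set.sdiff_nonempty.2 fun hIJ => h.lt.not_ge hIJ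
    obtain ⟨p, ⟨hpI, hpJ⟩, hpmin⟩ := (I.1 \ J.1).toFinite.exists_minimal hdiff
    have hlower : IsLowerSet (insert p J.1) := by
      rintro a b hba (rfl | ha)
      · rcases hba.eq_or_lt with rfl | hlt
        · exact Set.mem_insert _ _
        · by_contra hb
          exact hlt.not_ge (hpmin ⟨I.2 hlt.le hpI, fun h => hb (Or.inr h)⟩ hlt.le)
      · exact Or.inr (J.2 hba ha)
    have hJK : J < ⟨insert p J.1, hlower⟩ := Set.ssubset_insert hpJ
    have hKI : (⟨insert p J.1, hlower⟩ : OIdeal α) ≤ I := Set.insert_subset hpI h.le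
    have hIK := ((h.eq_or_eq hJK.le hKI).resolve_left hJK.ne').symm
    refine ⟨p, hpI, ?_⟩
    rw [hIK]
    exact Set.insert_sdiff_self_of_notMem hpJ
  · have hcov : J.1 ⋖ I.1 := hJ ▸ Set.sdiff_singleton_covBy hp
    exact CovBy.of_image (OrderEmbedding.subtype _) hcov

theorem ddeg_eq_sum_Tminus [Fintype α] (I : OIdeal α) : ddeg I = ∑ p, Tminus p I := by
  let remove : {p // p ∈ I.1 ∧ IsLowerSet (I.1 \ {p})} → {J : OIdeal α // J ⋖ I} :=
    fun p => ⟨⟨I.1 \ {p.1}, p.2.2⟩, OIdeal.covBy_iff.2 ⟨p, p.2.1, rfl⟩⟩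
  have hremove : Function.Bijective remove := by
    refine ⟨fun p q hpq => Subtype.ext ?_, fun ⟨J, hJ⟩ => ?_⟩
    · by_contra hne
      have hp : p.1 ∈ I.1 \ {q.1} := ⟨p.2.1, hne⟩
      have hpq' : I.1 \ {p.1} = I.1 \ {q.1} := congrArg (fun J => J.1.1) hpq
      rw [← hpq'] at hp
      exact hp.2 rfl
    · obtain ⟨p, hp, hJ⟩ := OIdeal.covBy_iff.1 hJ
      exact ⟨⟨p, hp, hJ ▸ J.2⟩, Subtype.ext (Subtype.ext hJ)⟩
  rw [ddeg, ← Nat.card_eq_of_bijective remove hremove, Nat.card_eq_fintype_card,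
    Fintype.card_subtype]
  exact (Finset.sum_boole _ _).symm

end DownDegree

section Expectation

variable {ι β : Type*} [Fintype ι]

def pushforward (μ : ι → ℝ) (f : ι → β) : β → ℝ := fun b => ∑ i with f i = b, μ i

theorem expect_pushforward [Finite β] (μ : ι → ℝ) (f : ι → β) (g : β → ℝ) :
    expect (pushforward μ f) g = expect μ (g ∘ f) := by
  have := Fintype.ofFinite β
  simp only [expect, pushforward, finsum_eq_sum_of_fintype, Finset.sum_mul]
  rw [← Finset.sum_fiberwise Finset.univ f]
  refine Finset.sum_congr rfl fun b _ => Finset.sum_congr rfl fun i hi => ?_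
  rw [Function.comp_apply, (Finset.mem_filter.1 hi).2]

theorem isProbDist_pushforward [Finite β] {μ : ι → ℝ} (hμ : IsProbDist μ) (f : ι → β) :
    IsProbDist (pushforward μ f) := by
  refine ⟨fun b => Finset.sum_nonneg fun i _ => hμ.1 i, ?_⟩
  simpa [expect] using (expect_pushforward μ f 1).trans (by simpa [expect] using hμ.2)

theorem expect_uni (g : ι → ℝ) : expect (uni ι) g = (∑ i, g i) / Fintype.card ι := by
  simp only [expect, uni, finsum_eq_sum_of_fintype, ← Finset.mul_sum, Nat.card_eq_fintype_card]
  exact inv_mul_eq_div _ _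

theorem isProbDist_uni [Nonempty ι] : IsProbDist (uni ι) := by
  refine ⟨fun _ => by simp only [uni]; positivity, ?_⟩
  simpa [expect] using expect_uni (ι := ι) 1

end Expectation

theorem statement7_general (α : Type*) [Finite α] [PartialOrder α] (r : ℕ)
    (rk : α → ℕ)
    (hcov : ∀ p q : α, p ⋖ q → rk q = rk p + 1)
    (hler : ∀ p, rk p ≤ r)
    (hgraded : ∀ C : Set α, IsMaxChain (· ≤ ·) C → Nat.card ↥C = r + 1)
    (htcde : IsTCDE α) :
    expect (uni (OIdeal α)) ddeg = (Nat.card α : ℝ) / ((r : ℝ) + 2) := by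
  have := Fintype.ofFinite α
  have hrk := strictMono_of_covBy_succ hcov
  let ideal : Fin (r + 2) → OIdeal α := fun j => rankIdeal rk hrk.monotone j
  have hplus (p : α) : ∑ j, Tplus p (ideal j) = 1 := by
    simp only [ideal,
      Tplus_rankIdeal hrk hcov (fun _ => rank_eq_zero_of_isMin hrk hler hgraded),
      Fin.sum_univ_eq_sum_range (fun j => if rk p = j then (1 : ℝ) else 0), Finset.sum_ite_eq,
      Finset.mem_range, if_pos (Nat.lt_succ_of_le (Nat.le_succ_of_le (hler p)))]
  have hminus (p : α) : ∑ j, Tminus p (ideal j) = 1 := by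
    simp only [ideal,
      Tminus_rankIdeal hrk hcov (fun _ => rank_eq_of_isMax hrk hler hgraded) p
        (Nat.le_of_lt_succ (Fin.is_lt _)),
      Fin.sum_univ_eq_sum_range (fun j => if j = rk p + 1 then (1 : ℝ) else 0),
      Finset.sum_ite_eq', Finset.mem_range, if_pos (Nat.succ_lt_succ (Nat.lt_succ_of_le (hler p)))]
  -- The uniform distribution on the `r + 2` rank ideals `∅ = I₀ ⊂ I₁ ⊂ ⋯ ⊂ I_{r+1} = P`
  let μ := pushforward (uni (Fin (r + 2))) ideal
  have hμ (g : OIdeal α → ℝ) : expect μ g = (∑ j, g (ideal j)) / ((r : ℝ) + 2) := by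
    rw [expect_pushforward, expect_uni, Fintype.card_fin]
    push_cast
    rfl
  have hsymm : ToggleSymmetric μ := fun p => by rw [hμ, hμ, hplus, hminus]
  rw [← htcde μ (isProbDist_pushforward isProbDist_uni ideal) hsymm, hμ]
  simp only [ddeg_eq_sum_Tminus]
  rw [Finset.sum_comm, Finset.sum_congr rfl fun p _ => hminus p, Finset.sum_const,
    Finset.card_univ, nsmul_one, Nat.card_eq_fintype_card]

/-- Proposition `prop:togsymedgedensity`.  Let `P` be a finite graded poset
of rank `r` (all maximal chains have length `r`; equivalently `P` is ranked, with rank function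
`rk`, with maximum rank value `r`) for which `J(P)` is tCDE.  Then the edge density of `J(P)`
is `E(uni_{J(P)}; ddeg) = #P / (r + 2)`. -/
theorem statement7 (α : Type*) [Finite α] [PartialOrder α] [Nonempty α] (r : ℕ)
    (rk : α → ℕ) (h0 : ∃ p, rk p = 0)
    (hcov : ∀ p q : α, p ⋖ q → rk q = rk p + 1)
    (hler : ∀ p, rk p ≤ r) (hrtop : ∃ p, rk p = r)
    (hgraded : ∀ C : Set α, IsMaxChain (· ≤ ·) C → Nat.card ↥C = r + 1)
    (htcde : IsTCDE α) :
    expect (uni (OIdeal α)) ddeg = (Nat.card α : ℝ) / ((r : ℝ) + 2) :=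
  statement7_general α r rk hcov hler hgraded htcde

end CDEPaper
end
end

section
/- Let λ be a strict partition. For any toggle-symmetric distribution μ on J(P_λ^shift) and any box [i,j] ∈ P_λ^shift, the expectation of the shifted rook statistic satisfies E(μ; R^shift_{ij}) = Σ_{[i',j] ∈ P_λ^shift} E(μ; T⁻_{[i',j]}) + Σ_{[i,j'] ∈ P_λ^shift} E(μ; T⁻_{[i,j']}) + Σ_{i' < i, [i',i'] ∈ P_λ^shift} E(μ; T⁻_{[i',i']}) + Σ_{j' > j, [j',j'] ∈ P_λ^shift} E(μ; T⁻_{[j',j']}). -/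
open scoped Classical

noncomputable section

namespace CDEPaper

/-- Auxiliary: swapping the sum over ideals with a sum over boxes. -/
private lemma swap_sum_aux {α β : Type*} [Fintype α] [Fintype β]
    (μ : β → ℝ) (c : α → Prop) [DecidablePred c] (T : α → β → ℝ) :
    ∑ I : β, μ I * ∑ q : α, (if c q then T q I else 0)
      = ∑ q : α, if c q then (∑ I : β, μ I * T q I) else 0 := by
  simp_rw [Finset.mul_sum]
  rw [Finset.sum_comm]
  refine Finset.sum_congr rfl fun q _ => ?_
  by_cases h : c q <;> simp [h]

set_option maxHeartbeats 1000000 in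
/-- Auxiliary pointwise indicator identity for the shifted rook statistic. -/
private lemma rook_indicator_id (e : ℝ) (a b i j : ℕ) (hab : a ≤ b) (hij : i ≤ j) :
    ((if a ≤ i ∧ b ≤ j then e else 0) + (if i ≤ a ∧ j ≤ b then e else 0)
      - (if a < i ∧ b < j ∧ a < b then e else 0)
      - (if i < a ∧ j < b ∧ a < b then e else 0))
    = ((if b = j then e else 0) + (if a = i then e else 0)
      + (if a < i ∧ a = b then e else 0) + (if j < b ∧ a = b then e else 0)) := by
  split_ifs <;> first | omega | ring

/-- Lemma `lem:shiftrooktogsym`.  Let `λ` be a strict partition of length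
`l`.  For any toggle-symmetric probability distribution `μ` on `J(P_λ^shift)` and any box
`[i,j] ∈ P_λ^shift`, the expectation of the shifted rook statistic equals the sum of the
expectations of `T⁻` over all boxes in column `j`, all boxes in row `i`, all main diagonal
boxes `[i',i']` with `i' < i`, and all main diagonal boxes `[j',j']` with `j' > j`. -/
theorem statement9 (l : ℕ) (lam : ℕ → ℕ)
    (hpos : ∀ i, 1 ≤ i → i ≤ l → 1 ≤ lam i)
    (hstrict : ∀ i, 1 ≤ i → i + 1 ≤ l → lam (i + 1) < lam i)
    (hzero : ∀ i, l < i → lam i = 0)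
    (i j : ℕ) (hij : (i, j) ∈ shiftCells l lam)
    (μ : OIdeal ↥(shiftCells l lam) → ℝ) (hμ : IsProbDist μ) (hts : ToggleSymmetric μ) :
    expect μ (Rshift (shiftCells l lam) i j) =
      (∑ᶠ (q : ↥(shiftCells l lam)),
          if (q : ℕ × ℕ).2 = j then expect μ (Tminus q) else 0)
      + (∑ᶠ (q : ↥(shiftCells l lam)),
          if (q : ℕ × ℕ).1 = i then expect μ (Tminus q) else 0)
      + (∑ᶠ (q : ↥(shiftCells l lam)),
          if (q : ℕ × ℕ).1 < i ∧ (q : ℕ × ℕ).1 = (q : ℕ × ℕ).2 then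
            expect μ (Tminus q) else 0)
      + (∑ᶠ (q : ↥(shiftCells l lam)),
          if j < (q : ℕ × ℕ).2 ∧ (q : ℕ × ℕ).1 = (q : ℕ × ℕ).2 then
            expect μ (Tminus q) else 0) := by
  classical
  have hij' : i ≤ j := hij.2.2.1
  -- finiteness of the cell set
  have hSfin : (shiftCells l lam).Finite := by
    have hsub : shiftCells l lam ⊆
        Set.Icc 1 l ×ˢ Set.Icc 1 ((Finset.range (l + 1)).sup fun k => lam k + k) := by
      rintro ⟨a, b⟩ ⟨h1, h2, h3, h4⟩
      refine ⟨⟨h1, h2⟩, le_trans h1 h3, ?_⟩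
      have : lam a + a ≤ (Finset.range (l + 1)).sup fun k => lam k + k :=
        Finset.le_sup (f := fun k => lam k + k) (Finset.mem_range.mpr (Nat.lt_succ_of_le h2))
      exact le_of_lt (lt_of_lt_of_le h4 this)
    exact ((Set.finite_Icc _ _).prod (Set.finite_Icc _ _)).subset hsub
  haveI : Finite ↥(shiftCells l lam) := hSfin.to_subtype
  haveI : Fintype ↥(shiftCells l lam) := Fintype.ofFinite _
  haveI : Fintype (OIdeal ↥(shiftCells l lam)) := Fintype.ofFinite _
  -- expand everything to `Finset` sums
  simp only [expect, Rshift, finsum_eq_sum_of_fintype]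
  -- distribute and swap sums
  simp_rw [mul_sub, mul_add, Finset.sum_sub_distrib, Finset.sum_add_distrib,
    swap_sum_aux]
  -- use toggle-symmetry to replace `Tplus` expectations by `Tminus` expectations
  have hts' : ∀ q : ↥(shiftCells l lam),
      ∑ I, μ I * Tplus q I = ∑ I, μ I * Tminus q I := by
    intro q
    have := hts q
    simpa only [expect, finsum_eq_sum_of_fintype] using this
  simp_rw [hts']
  -- combine into a single sum on both sides and compare termwise
  rw [← Finset.sum_add_distrib, ← Finset.sum_add_distrib, ← Finset.sum_add_distrib,
    ← Finset.sum_add_distrib, ← Finset.sum_sub_distrib, ← Finset.sum_sub_distrib]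
  refine Finset.sum_congr rfl fun q _ => ?_
  exact rook_indicator_id _ _ _ _ _ q.2.2.2.1 hij'

end CDEPaper
end
end
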